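/- arXiv:1310.8455 — 14 statements merged into one kernel-verified Lean document; each statement's English description precedes it below -/
import Mathlib

section
/- Let T : V → W be a surjective K-linear map and B ≤ V* a subspace such that the boundary problem (T, B) is regular (V = Ker T ⊕ B⊥). Let P : V → V be the projector onto Ker T along B⊥ (the idempotent with range Ker T and kernel B⊥), and let H : W → V be any right inverse of T (T ∘ H = id_W). Then G := (id_V − P) ∘ H is the Green's operator of (T, B): for every f ∈ W, Gf ∈ B⊥ and T(Gf) = f; in particular G is a right inverse of T. -/
theorem stmt_1 {K V W : Type*} [Field K] [AddCommGroup V] [Module K V]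
    [AddCommGroup W] [Module K W]
    (T : V →ₗ[K] W) (hT : Function.Surjective T)
    (B : Submodule K (Module.Dual K V))
    (hreg : IsCompl (LinearMap.ker T) B.dualCoannihilator)
    (P : V →ₗ[K] V) (hP : P ∘ₗ P = P)
    (hPrange : LinearMap.range P = LinearMap.ker T)
    (hPker : LinearMap.ker P = B.dualCoannihilator)
    (H : W →ₗ[K] V) (hH : T ∘ₗ H = LinearMap.id) :
    ∀ f : W, ((LinearMap.id - P) ∘ₗ H) f ∈ B.dualCoannihilator ∧
      T (((LinearMap.id - P) ∘ₗ H) f) = f := by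
  intro f
  have hPP : ∀ v, P (P v) = P v := fun v => congrArg (fun g => g v) hP
  constructor
  · rw [← hPker]
    simp [LinearMap.mem_ker, map_sub, hPP]
  · have hTP : T (P (H f)) = 0 := by
      have : P (H f) ∈ LinearMap.ker T := hPrange ▸ LinearMap.mem_range_self P (H f)
      exact this
    have hTH : T (H f) = f := congrArg (fun g => g f) hH
    simp [map_sub, hTP, hTH]
end

section
/- Let (T, B, E) be a regular generalized boundary problem, i.e., T : V → W is a surjective K-linear map, B ≤ V* with Ker T ∩ B⊥ = {0}, and E ≤ W with W = T(B⊥) ⊕ E. Let Q : W → W be the projector onto T(B⊥) along E. Then for every f ∈ W there exists a unique u ∈ V with Tu = Qf and u ∈ B⊥; hence the generalized Green's operator of (T, B, E) is a well-defined linear map W → V. -/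
theorem stmt_2 {K V W : Type*} [Field K] [AddCommGroup V] [Module K V]
    [AddCommGroup W] [Module K W]
    (T : V →ₗ[K] W) (hT : Function.Surjective T)
    (B : Submodule K (Module.Dual K V)) (E : Submodule K W)
    (hsemi : LinearMap.ker T ⊓ B.dualCoannihilator = ⊥)
    (hE : IsCompl (Submodule.map T B.dualCoannihilator) E)
    (Q : W →ₗ[K] W) (hQ : Q ∘ₗ Q = Q)
    (hQrange : LinearMap.range Q = Submodule.map T B.dualCoannihilator)
    (hQker : LinearMap.ker Q = E) :
    (∀ f : W, ∃! u : V, u ∈ B.dualCoannihilator ∧ T u = Q f) ∧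
      ∃ G : W →ₗ[K] V, ∀ f : W, G f ∈ B.dualCoannihilator ∧ T (G f) = Q f := by
  set S := B.dualCoannihilator
  -- T restricted to S is injective
  have hinj : Function.Injective (T.domRestrict S) := by
    rw [← LinearMap.ker_eq_bot]
    rw [Submodule.eq_bot_iff]
    rintro ⟨x, hxS⟩ hx
    have hxk : x ∈ LinearMap.ker T := by simpa using hx
    have : x ∈ LinearMap.ker T ⊓ S := ⟨hxk, hxS⟩
    rw [hsemi] at this
    simpa using this
  have hrange : LinearMap.range (T.domRestrict S) = Submodule.map T S := by
    ext w
    simp [LinearMap.mem_range, Submodule.mem_map]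
  have hQmem : ∀ f : W, Q f ∈ Submodule.map T S := by
    intro f
    rw [← hQrange]
    exact ⟨f, rfl⟩
  -- existence/uniqueness part
  have uniq : ∀ f : W, ∃! u : V, u ∈ S ∧ T u = Q f := by
    intro f
    obtain ⟨x, hxS, hxT⟩ := hQmem f
    refine ⟨x, ⟨hxS, hxT⟩, ?_⟩
    rintro y ⟨hyS, hyT⟩
    have : (⟨y, hyS⟩ : S) = ⟨x, hxS⟩ := hinj (by simp [hyT, hxT])
    simpa using congrArg Subtype.val this
  refine ⟨uniq, ?_⟩
  -- construct G
  let e : S ≃ₗ[K] LinearMap.range (T.domRestrict S) :=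
    LinearEquiv.ofInjective _ hinj
  let Q' : W →ₗ[K] LinearMap.range (T.domRestrict S) :=
    Q.codRestrict _ (fun f => by rw [hrange]; exact hQmem f)
  refine ⟨S.subtype ∘ₗ (e.symm : _ →ₗ[K] S) ∘ₗ Q', fun f => ?_⟩
  constructor
  · exact (e.symm (Q' f)).2
  · have key : ∀ y : S, ((e y : LinearMap.range (T.domRestrict S)) : W) = T y := fun y => rfl
    have h2 : ((e (e.symm (Q' f)) : LinearMap.range (T.domRestrict S)) : W) = Q f := by
      rw [e.apply_symm_apply]; rfl
    rw [key] at h2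
    simpa using h2
end

section
/- Let (T, B, E) be a regular generalized boundary problem with T : V → W surjective K-linear, and let G : W → V be its generalized Green's operator. Then G ∘ T ∘ G = G, i.e., G is an outer inverse of T. -/
theorem stmt_3 {K V W : Type*} [Field K] [AddCommGroup V] [Module K V]
    [AddCommGroup W] [Module K W]
    (T : V →ₗ[K] W) (hT : Function.Surjective T)
    (B : Submodule K (Module.Dual K V)) (E : Submodule K W)
    (hsemi : LinearMap.ker T ⊓ B.dualCoannihilator = ⊥)
    (hE : IsCompl (Submodule.map T B.dualCoannihilator) E)
    (Q : W →ₗ[K] W) (hQ : Q ∘ₗ Q = Q)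
    (hQrange : LinearMap.range Q = Submodule.map T B.dualCoannihilator)
    (hQker : LinearMap.ker Q = E)
    (G : W →ₗ[K] V)
    (hG : ∀ f : W, G f ∈ B.dualCoannihilator ∧ T (G f) = Q f) :
    G ∘ₗ T ∘ₗ G = G := by
  ext f
  simp only [LinearMap.comp_apply]
  have h1 := hG f
  have h2 := hG (T (G f))
  have hQQ : Q (Q f) = Q f := by
    have := congrArg (fun L => L f) hQ
    simpa using this
  have hdiff : G (T (G f)) - G f ∈ LinearMap.ker T ⊓ B.dualCoannihilator := by
    constructor
    · show _ ∈ LinearMap.ker T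
      rw [LinearMap.mem_ker, map_sub, h2.2, h1.2, hQQ, sub_self]
    · exact Submodule.sub_mem _ h2.1 h1.1
  rw [hsemi] at hdiff
  have := Submodule.mem_bot K |>.mp hdiff
  exact sub_eq_zero.mp this
end

section
/- Let (T1, B1, E1) and (T2, B2, E2) be regular generalized boundary problems with T1 : V → W and T2 : U → V surjective K-linear maps, B1 ≤ V* and B2 ≤ U* finite-dimensional, and let G1 and G2 be their generalized Green's operators. If G2 ∘ G1 is an outer inverse of T1 ∘ T2, then the generalized boundary problem (T1∘T2, B2 + T2*(B1 ∩ E2⊥), E1 + T1(B1⊥ ∩ E2)) is regular and its generalized Green's operator equals G2 ∘ G1. Furthermore the two sums are direct: B2 ∩ T2*(B1 ∩ E2⊥) = {0} and E1 ∩ T1(B1⊥ ∩ E2) = {0}. -/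
private lemma idem_apply {R M : Type*} [Ring R] [AddCommGroup M] [Module R M]
    {P : M →ₗ[R] M} (h : P ∘ₗ P = P) : ∀ x ∈ LinearMap.range P, P x = x := by
  rintro x ⟨y, rfl⟩
  exact DFunLike.congr_fun h y

private lemma idem_isCompl {R M : Type*} [Ring R] [AddCommGroup M] [Module R M]
    {P : M →ₗ[R] M} (h : P ∘ₗ P = P) :
    IsCompl (LinearMap.range P) (LinearMap.ker P) := by
  constructor
  · rw [disjoint_iff, eq_bot_iff]
    rintro x ⟨hr, hk⟩
    have h1 : P x = x := idem_apply h x hr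
    have h2 : P x = 0 := hk
    simp [h1.symm.trans h2]
  · rw [codisjoint_iff, eq_top_iff]
    intro x _
    refine Submodule.mem_sup.mpr ⟨P x, ⟨x, rfl⟩, x - P x, ?_, by abel⟩
    have : P (x - P x) = 0 := by
      rw [map_sub, idem_apply h (P x) ⟨x, rfl⟩, sub_self]
    exact this

theorem stmt_5 {K U V W : Type*} [Field K]
    [AddCommGroup U] [Module K U] [AddCommGroup V] [Module K V]
    [AddCommGroup W] [Module K W]
    (T1 : V →ₗ[K] W) (T2 : U →ₗ[K] V)
    (hT1 : Function.Surjective T1) (hT2 : Function.Surjective T2)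
    (B1 : Submodule K (Module.Dual K V)) (B2 : Submodule K (Module.Dual K U))
    [FiniteDimensional K B1] [FiniteDimensional K B2]
    (E1 : Submodule K W) (E2 : Submodule K V)
    (hsemi1 : LinearMap.ker T1 ⊓ B1.dualCoannihilator = ⊥)
    (hreg1 : IsCompl (Submodule.map T1 B1.dualCoannihilator) E1)
    (hsemi2 : LinearMap.ker T2 ⊓ B2.dualCoannihilator = ⊥)
    (hreg2 : IsCompl (Submodule.map T2 B2.dualCoannihilator) E2)
    (Q1 : W →ₗ[K] W) (hQ1 : Q1 ∘ₗ Q1 = Q1)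
    (hQ1range : LinearMap.range Q1 = Submodule.map T1 B1.dualCoannihilator)
    (hQ1ker : LinearMap.ker Q1 = E1)
    (Q2 : V →ₗ[K] V) (hQ2 : Q2 ∘ₗ Q2 = Q2)
    (hQ2range : LinearMap.range Q2 = Submodule.map T2 B2.dualCoannihilator)
    (hQ2ker : LinearMap.ker Q2 = E2)
    (G1 : W →ₗ[K] V)
    (hG1 : ∀ f : W, G1 f ∈ B1.dualCoannihilator ∧ T1 (G1 f) = Q1 f)
    (G2 : V →ₗ[K] U)
    (hG2 : ∀ f : V, G2 f ∈ B2.dualCoannihilator ∧ T2 (G2 f) = Q2 f)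
    (houter : (G2 ∘ₗ G1) ∘ₗ (T1 ∘ₗ T2) ∘ₗ (G2 ∘ₗ G1) = G2 ∘ₗ G1) :
    -- regularity of the composite problem
    (LinearMap.ker (T1 ∘ₗ T2) ⊓
        (B2 ⊔ Submodule.map T2.dualMap (B1 ⊓ E2.dualAnnihilator)).dualCoannihilator = ⊥) ∧
    IsCompl
      (Submodule.map (T1 ∘ₗ T2)
        (B2 ⊔ Submodule.map T2.dualMap (B1 ⊓ E2.dualAnnihilator)).dualCoannihilator)
      (E1 ⊔ Submodule.map T1 (B1.dualCoannihilator ⊓ E2)) ∧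
    -- its generalized Green's operator equals G2 ∘ G1
    (∀ Q : W →ₗ[K] W, Q ∘ₗ Q = Q →
      LinearMap.range Q = Submodule.map (T1 ∘ₗ T2)
        (B2 ⊔ Submodule.map T2.dualMap (B1 ⊓ E2.dualAnnihilator)).dualCoannihilator →
      LinearMap.ker Q = E1 ⊔ Submodule.map T1 (B1.dualCoannihilator ⊓ E2) →
      ∀ f : W,
        (G2 ∘ₗ G1) f ∈
          (B2 ⊔ Submodule.map T2.dualMap (B1 ⊓ E2.dualAnnihilator)).dualCoannihilator ∧
        (T1 ∘ₗ T2) ((G2 ∘ₗ G1) f) = Q f) ∧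
    -- the two sums are direct
    (B2 ⊓ Submodule.map T2.dualMap (B1 ⊓ E2.dualAnnihilator) = ⊥) ∧
    (E1 ⊓ Submodule.map T1 (B1.dualCoannihilator ⊓ E2) = ⊥) := by
  -- Q1, Q2 fix their ranges
  have hQ1fix : ∀ x ∈ LinearMap.range Q1, Q1 x = x := idem_apply hQ1
  have hQ2fix : ∀ x ∈ LinearMap.range Q2, Q2 x = x := idem_apply hQ2
  -- G1 is a left inverse of T1 on B1⊥, similarly G2
  have hG1T1 : ∀ v ∈ B1.dualCoannihilator, G1 (T1 v) = v := by
    intro v hv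
    have hQ : Q1 (T1 v) = T1 v := hQ1fix _ (hQ1range ▸ ⟨v, hv, rfl⟩)
    have hmem : G1 (T1 v) - v ∈ LinearMap.ker T1 ⊓ B1.dualCoannihilator := by
      refine ⟨?_, Submodule.sub_mem _ (hG1 (T1 v)).1 hv⟩
      show T1 (G1 (T1 v) - v) = 0
      rw [map_sub, (hG1 (T1 v)).2, hQ, sub_self]
    rw [hsemi1, Submodule.mem_bot] at hmem
    exact sub_eq_zero.mp hmem
  have hG2T2 : ∀ u ∈ B2.dualCoannihilator, G2 (T2 u) = u := by
    intro u hu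
    have hQ : Q2 (T2 u) = T2 u := hQ2fix _ (hQ2range ▸ ⟨u, hu, rfl⟩)
    have hmem : G2 (T2 u) - u ∈ LinearMap.ker T2 ⊓ B2.dualCoannihilator := by
      refine ⟨?_, Submodule.sub_mem _ (hG2 (T2 u)).1 hu⟩
      show T2 (G2 (T2 u) - u) = 0
      rw [map_sub, (hG2 (T2 u)).2, hQ, sub_self]
    rw [hsemi2, Submodule.mem_bot] at hmem
    exact sub_eq_zero.mp hmem
  -- G1 kills E1, G2 kills E2
  have hG1E1 : ∀ f ∈ E1, G1 f = 0 := by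
    intro f hf
    have hq : Q1 f = 0 := by rw [← LinearMap.mem_ker, hQ1ker]; exact hf
    have hmem : G1 f ∈ LinearMap.ker T1 ⊓ B1.dualCoannihilator := by
      refine ⟨?_, (hG1 f).1⟩
      show T1 (G1 f) = 0
      rw [(hG1 f).2, hq]
    rw [hsemi1, Submodule.mem_bot] at hmem
    exact hmem
  have hG2E2 : ∀ v ∈ E2, G2 v = 0 := by
    intro v hv
    have hq : Q2 v = 0 := by rw [← LinearMap.mem_ker, hQ2ker]; exact hv
    have hmem : G2 v ∈ LinearMap.ker T2 ⊓ B2.dualCoannihilator := by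
      refine ⟨?_, (hG2 v).1⟩
      show T2 (G2 v) = 0
      rw [(hG2 v).2, hq]
    rw [hsemi2, Submodule.mem_bot] at hmem
    exact hmem
  -- x - Q2 x ∈ E2
  have hsubE2 : ∀ x : V, x - Q2 x ∈ E2 := by
    intro x
    have hxx : Q2 (Q2 x) = Q2 x := DFunLike.congr_fun hQ2 x
    rw [← hQ2ker, LinearMap.mem_ker, map_sub, hxx, sub_self]
  have hsubE1 : ∀ x : W, x - Q1 x ∈ E1 := by
    intro x
    have hxx : Q1 (Q1 x) = Q1 x := DFunLike.congr_fun hQ1 x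
    rw [← hQ1ker, LinearMap.mem_ker, map_sub, hxx, sub_self]
  -- key duality identity using finite-dimensionality of B1
  have auxA : (B1 ⊓ E2.dualAnnihilator).dualCoannihilator = B1.dualCoannihilator ⊔ E2 := by
    conv_lhs => rw [← Subspace.dualCoannihilator_dualAnnihilator_eq (W := B1),
      ← Submodule.dualAnnihilator_sup_eq]
    exact Subspace.dualAnnihilator_dualCoannihilator_eq
  -- the coannihilator of the composite boundary space
  have hCperp : (B2 ⊔ Submodule.map T2.dualMap (B1 ⊓ E2.dualAnnihilator)).dualCoannihilator
      = B2.dualCoannihilator ⊓ Submodule.comap T2 (B1.dualCoannihilator ⊔ E2) := by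
    rw [Submodule.dualCoannihilator_sup_eq]
    congr 1
    rw [← auxA]
    ext u
    simp only [Submodule.mem_dualCoannihilator, Submodule.mem_comap]
    constructor
    · intro h β hβ
      exact h (T2.dualMap β) ⟨β, hβ, rfl⟩
    · rintro h φ ⟨β, hβ, rfl⟩
      exact h β hβ
  -- the range of G2 ∘ G1 is the coannihilator of the composite boundary space
  have hrange : (B2 ⊔ Submodule.map T2.dualMap (B1 ⊓ E2.dualAnnihilator)).dualCoannihilator
      = LinearMap.range (G2 ∘ₗ G1) := by
    rw [hCperp]
    ext u
    constructor
    · rintro ⟨hu2, hu12⟩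
      have hu12' : T2 u ∈ B1.dualCoannihilator ⊔ E2 := hu12
      obtain ⟨b, hb, e, he, hbe⟩ := Submodule.mem_sup.mp hu12'
      refine ⟨T1 b, ?_⟩
      show G2 (G1 (T1 b)) = u
      rw [hG1T1 b hb]
      have hb' : b = T2 u - e := by rw [← hbe]; abel
      rw [hb', map_sub, hG2T2 u hu2, hG2E2 e he, sub_zero]
    · rintro ⟨f, rfl⟩
      refine ⟨(hG2 _).1, ?_⟩
      show T2 (G2 (G1 f)) ∈ B1.dualCoannihilator ⊔ E2
      rw [(hG2 (G1 f)).2]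
      refine Submodule.mem_sup.mpr ⟨G1 f, (hG1 f).1, -(G1 f - Q2 (G1 f)),
        Submodule.neg_mem _ (hsubE2 (G1 f)), by abel⟩
  -- kernel characterization of G2 ∘ G1
  have hker : ∀ f : W, (G2 ∘ₗ G1) f = 0 ↔
      f ∈ E1 ⊔ Submodule.map T1 (B1.dualCoannihilator ⊓ E2) := by
    intro f
    constructor
    · intro h0
      have h0' : G2 (G1 f) = 0 := h0
      have hq : Q2 (G1 f) = 0 := by
        rw [← (hG2 (G1 f)).2, h0', map_zero]
      have hE2 : G1 f ∈ E2 := by rw [← hQ2ker]; exact hq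
      refine Submodule.mem_sup.mpr ⟨f - Q1 f, hsubE1 f, Q1 f,
        ⟨G1 f, ⟨(hG1 f).1, hE2⟩, (hG1 f).2⟩, by abel⟩
    · intro hf
      obtain ⟨e, he, w, hw, hews⟩ := Submodule.mem_sup.mp hf
      obtain ⟨v, ⟨hv1, hv2⟩, rfl⟩ := hw
      show G2 (G1 f) = 0
      rw [← hews, map_add, hG1T1 v hv1, hG1E1 e he, zero_add]
      exact hG2E2 v hv2
    -- first goal: semi-regularity
  have goal1 : LinearMap.ker (T1 ∘ₗ T2) ⊓
      (B2 ⊔ Submodule.map T2.dualMap (B1 ⊓ E2.dualAnnihilator)).dualCoannihilator = ⊥ := by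
    rw [eq_bot_iff]
    rintro u ⟨huK, huC⟩
    rw [hrange] at huC
    obtain ⟨f, rfl⟩ := huC
    have h := DFunLike.congr_fun houter f
    simp only [LinearMap.comp_apply] at h ⊢
    have huK' : T1 (T2 (G2 (G1 f))) = 0 := huK
    rw [huK', map_zero, map_zero] at h
    rw [Submodule.mem_bot]
    exact h.symm
  -- the projector P = T ∘ G
  set P : W →ₗ[K] W := (T1 ∘ₗ T2) ∘ₗ (G2 ∘ₗ G1) with hP
  have hPP : P ∘ₗ P = P := by
    apply LinearMap.ext
    intro f
    have h := DFunLike.congr_fun houter f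
    simp only [hP, LinearMap.comp_apply] at h ⊢
    rw [h]
  have hPrange : LinearMap.range P = Submodule.map (T1 ∘ₗ T2)
      (B2 ⊔ Submodule.map T2.dualMap (B1 ⊓ E2.dualAnnihilator)).dualCoannihilator := by
    rw [hrange, hP, LinearMap.range_comp]
  have hPker : LinearMap.ker P = E1 ⊔ Submodule.map T1 (B1.dualCoannihilator ⊓ E2) := by
    ext f
    rw [LinearMap.mem_ker, ← hker f]
    constructor
    · intro h
      have hmem : (G2 ∘ₗ G1) f ∈ LinearMap.ker (T1 ∘ₗ T2) ⊓
          (B2 ⊔ Submodule.map T2.dualMap (B1 ⊓ E2.dualAnnihilator)).dualCoannihilator :=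
        ⟨h, hrange ▸ ⟨f, rfl⟩⟩
      rw [goal1, Submodule.mem_bot] at hmem
      exact hmem
    · intro h
      show (T1 ∘ₗ T2) ((G2 ∘ₗ G1) f) = 0
      rw [h, map_zero]
  refine ⟨goal1, ?_, ?_, ?_, ?_⟩
  · -- IsCompl
    rw [← hPrange, ← hPker]
    exact idem_isCompl hPP
  · -- Green's operator
    intro Q hQQ hQr hQk f
    refine ⟨hrange ▸ ⟨f, rfl⟩, ?_⟩
    have h1 : Q (P f) = P f := idem_apply hQQ (P f) (by rw [hQr, ← hPrange]; exact ⟨f, rfl⟩)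
    have h2 : Q (f - P f) = 0 := by
      have : f - P f ∈ LinearMap.ker Q := by
        rw [hQk, ← hPker, LinearMap.mem_ker, map_sub,
          idem_apply hPP (P f) ⟨f, rfl⟩, sub_self]
      exact this
    have : Q f = Q (P f) + Q (f - P f) := by rw [← map_add]; congr 1; abel
    rw [this, h1, h2, add_zero]
    rfl
  · -- B2 ⊓ T2*(B1 ⊓ E2°) = ⊥
    rw [eq_bot_iff]
    rintro γ ⟨hγB2, β, ⟨hβ1, hβ2⟩, rfl⟩
    rw [Submodule.mem_bot]
    have hβ0 : ∀ v : V, β v = 0 := by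
      intro v
      have hd : β v = β (Q2 v) + β (v - Q2 v) := by rw [← map_add]; congr 1; abel
      have h1 : β (v - Q2 v) = 0 :=
        (Submodule.mem_dualAnnihilator β).mp hβ2 _ (hsubE2 v)
      obtain ⟨u, hu, huv⟩ := hQ2range ▸ LinearMap.mem_range_self Q2 v
      have h2 : β (Q2 v) = 0 := by
        rw [← huv]
        exact (Submodule.mem_dualCoannihilator u).mp hu _ hγB2
      rw [hd, h1, h2, add_zero]
    ext u
    exact hβ0 (T2 u)
  · -- E1 ⊓ T1(B1⊥ ⊓ E2) = ⊥
    rw [eq_bot_iff]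
    rintro w ⟨hwE1, v, ⟨hv1, hv2⟩, rfl⟩
    rw [Submodule.mem_bot]
    have h1 : Q1 (T1 v) = T1 v := hQ1fix _ (hQ1range ▸ ⟨v, hv1, rfl⟩)
    have h2 : Q1 (T1 v) = 0 := by
      rw [← LinearMap.mem_ker, hQ1ker]; exact hwE1
    rw [← h1, h2]
end

section
/- Let (T1, B1, E1) and (T2, B2, E2) be regular generalized boundary problems with T1 : V → W and T2 : U → V surjective K-linear maps, B1 ≤ V* and B2 ≤ U* finite-dimensional, and let G1 and G2 be their generalized Green's operators. Then G2 ∘ G1 is an outer inverse of T1 ∘ T2 if and only if the composite problem (T1, B1, E1) ∘ (T2, B2, E2) = (T1∘T2, B2 + T2*(B1 ∩ E2⊥), E1 + T1(B1⊥ ∩ E2)) is regular and its generalized Green's operator equals G2 ∘ G1. -/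
/-!
Write `S = B⊥`; the composite side conditions cut out `S = S2 ∩ T2⁻¹(S1 + E2)`, which uses that
`B1` is finite-dimensional. If `G = G2 G1` is an outer inverse of `T = T1 T2`, then
`G1 T1 (v - Q2 v) ∈ E2` for every `v ∈ S1`; this makes `G` a left inverse of `T` on `S` with
`ker (T G) = E1 + T1 (S1 ∩ E2)`. Hence `T G` is the projector onto `T S` along the composite `E`,
which gives regularity and identifies `G` as the Green's operator. Conversely, the Green's
operator of a regular problem is always an outer inverse.
-/

open LinearMap Submodule

section Green

variable {R U V W : Type*} [Ring R] [AddCommGroup U] [Module R U] [AddCommGroup V] [Module R V]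
  [AddCommGroup W] [Module R W]

theorem IsIdempotentElem.sub_apply_mem_ker {Q : W →ₗ[R] W} (hQ : IsIdempotentElem Q) (x : W) :
    x - Q x ∈ ker Q := by
  rw [mem_ker, map_sub, ← Module.End.mul_apply, hQ.eq, sub_self]

/-- `G` is the generalized Green's operator of the regular problem `(T, B, E)`, encoded by
`S = B⊥` and the projector `Q` onto `T S` along `E = ker Q`. -/
structure IsGreenOperator (T : U →ₗ[R] W) (S : Submodule R U) (Q : W →ₗ[R] W)
    (G : W →ₗ[R] U) : Prop where
  ker_inf_eq_bot : ker T ⊓ S = ⊥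
  isIdempotentElem : IsIdempotentElem Q
  range_eq : range Q = S.map T
  apply_mem : ∀ f, G f ∈ S
  map_apply : ∀ f, T (G f) = Q f

namespace IsGreenOperator

variable {T : U →ₗ[R] W} {S : Submodule R U} {Q : W →ₗ[R] W} {G : W →ₗ[R] U}

theorem injOn (h : IsGreenOperator T S Q G) : Set.InjOn T S :=
  disjoint_ker_iff_injOn.1 (disjoint_iff.2 (inf_comm (ker T) S ▸ h.ker_inf_eq_bot))

theorem eq_of_projection_apply_eq (h : IsGreenOperator T S Q G) {f : W} {u : U} (hu : u ∈ S)
    (hf : Q f = T u) : G f = u :=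
  h.injOn (h.apply_mem f) hu (by rw [h.map_apply, hf])

theorem projection_map_apply (h : IsGreenOperator T S Q G) {u : U} (hu : u ∈ S) :
    Q (T u) = T u :=
  h.isIdempotentElem.mem_range_iff.1 (h.range_eq ▸ mem_map_of_mem hu)

theorem apply_map (h : IsGreenOperator T S Q G) {u : U} (hu : u ∈ S) : G (T u) = u :=
  h.eq_of_projection_apply_eq hu (h.projection_map_apply hu)

theorem apply_eq_zero (h : IsGreenOperator T S Q G) {f : W} (hf : f ∈ ker Q) : G f = 0 :=
  h.eq_of_projection_apply_eq S.zero_mem (by rw [mem_ker.1 hf, map_zero])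

theorem comp_comp_self (h : IsGreenOperator T S Q G) : G ∘ₗ T ∘ₗ G = G :=
  LinearMap.ext fun f => h.eq_of_projection_apply_eq (h.apply_mem f)
    (h.projection_map_apply (h.apply_mem f))

end IsGreenOperator

section LeftInvOn

variable {T : U →ₗ[R] W} {S : Submodule R U} {G : W →ₗ[R] U}

theorem ker_inf_eq_bot_of_leftInvOn (h : Set.LeftInvOn G T S) : ker T ⊓ S = ⊥ := by
  refine eq_bot_iff.2 fun u ⟨hTu, hu⟩ => ?_
  rw [mem_bot, ← h hu, mem_ker.1 hTu, map_zero]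

theorem isIdempotentElem_comp_of_leftInvOn (hG : range G ≤ S) (h : Set.LeftInvOn G T S) :
    IsIdempotentElem (T ∘ₗ G) :=
  LinearMap.ext fun f => congrArg T (h (hG (mem_range_self G f)))

theorem range_comp_of_leftInvOn (hG : range G ≤ S) (h : Set.LeftInvOn G T S) :
    range (T ∘ₗ G) = S.map T := by
  refine range_comp G T ▸ congrArg (map T) (le_antisymm hG fun u hu => ?_)
  exact h hu ▸ mem_range_self G (T u)

theorem isCompl_map_ker_comp_of_leftInvOn (hG : range G ≤ S) (h : Set.LeftInvOn G T S) :
    IsCompl (S.map T) (ker (T ∘ₗ G)) :=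
  range_comp_of_leftInvOn hG h ▸ (isIdempotentElem_comp_of_leftInvOn hG h).isCompl

theorem isGreenOperator_of_leftInvOn (hG : range G ≤ S) (h : Set.LeftInvOn G T S)
    {Q : W →ₗ[R] W} (hQ : IsIdempotentElem Q) (hQr : range Q = S.map T)
    (hQk : ker Q = ker (T ∘ₗ G)) : IsGreenOperator T S Q G where
  ker_inf_eq_bot := ker_inf_eq_bot_of_leftInvOn h
  isIdempotentElem := hQ
  range_eq := hQr
  apply_mem f := hG (mem_range_self G f)
  map_apply f := by
    have hTG : T ∘ₗ G = Q := (isIdempotentElem_comp_of_leftInvOn hG h).ext hQ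
      ⟨(range_comp_of_leftInvOn hG h).trans hQr.symm, hQk.symm⟩
    exact congr($hTG f)

end LeftInvOn

namespace IsGreenOperator

variable {T1 : V →ₗ[R] W} {T2 : U →ₗ[R] V} {S1 : Submodule R V} {S2 : Submodule R U}
  {Q1 : W →ₗ[R] W} {Q2 : V →ₗ[R] V} {G1 : W →ₗ[R] V} {G2 : V →ₗ[R] U}

theorem range_comp_le (h1 : IsGreenOperator T1 S1 Q1 G1) (h2 : IsGreenOperator T2 S2 Q2 G2) :
    range (G2 ∘ₗ G1) ≤ S2 ⊓ (S1 ⊔ ker Q2).comap T2 := by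
  rintro _ ⟨f, rfl⟩
  refine ⟨h2.apply_mem _, ?_⟩
  rw [SetLike.mem_coe, mem_comap, comp_apply, h2.map_apply, ← sub_sub_cancel (G1 f) (Q2 (G1 f))]
  exact sub_mem (mem_sup_left (h1.apply_mem f))
    (mem_sup_right (h2.isIdempotentElem.sub_apply_mem_ker _))

theorem le_ker_comp (h1 : IsGreenOperator T1 S1 Q1 G1) (h2 : IsGreenOperator T2 S2 Q2 G2) :
    ker Q1 ⊔ (S1 ⊓ ker Q2).map T1 ≤ ker (G2 ∘ₗ G1) := by
  refine sup_le (fun f hf => ?_) ?_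
  · rw [mem_ker, comp_apply, h1.apply_eq_zero hf, map_zero]
  · rintro _ ⟨a, ⟨ha1, ha2⟩, rfl⟩
    rw [mem_ker, comp_apply, h1.apply_map ha1, h2.apply_eq_zero ha2]

theorem apply_map_sub_projection_mem_ker (h1 : IsGreenOperator T1 S1 Q1 G1)
    (h2 : IsGreenOperator T2 S2 Q2 G2)
    (hO : (G2 ∘ₗ G1) ∘ₗ (T1 ∘ₗ T2) ∘ₗ (G2 ∘ₗ G1) = G2 ∘ₗ G1) {v : V} (hv : v ∈ S1) :
    G1 (T1 (v - Q2 v)) ∈ ker Q2 := by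
  have h := congr(T2 ($hO (T1 v)))
  simp only [comp_apply, h1.apply_map hv, h2.map_apply] at h
  rw [mem_ker, map_sub, map_sub, map_sub, h1.apply_map hv, h, sub_self]

theorem leftInvOn_comp (h1 : IsGreenOperator T1 S1 Q1 G1) (h2 : IsGreenOperator T2 S2 Q2 G2)
    (hO : (G2 ∘ₗ G1) ∘ₗ (T1 ∘ₗ T2) ∘ₗ (G2 ∘ₗ G1) = G2 ∘ₗ G1) :
    Set.LeftInvOn (G2 ∘ₗ G1) (T1 ∘ₗ T2) (S2 ⊓ (S1 ⊔ ker Q2).comap T2) := by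
  rintro u ⟨hu2, hu⟩
  obtain ⟨a, ha, e, he, hae⟩ := mem_sup.1 hu
  have hQa : Q2 a = T2 u := by
    rw [← h2.projection_map_apply hu2, ← hae, map_add, mem_ker.1 he, add_zero]
  have hQe : Q2 (G1 (T1 e)) = 0 := by
    have he' : e = -(a - Q2 a) := by rw [hQa, ← hae]; abel
    rw [he', map_neg, map_neg, map_neg,
      mem_ker.1 (h1.apply_map_sub_projection_mem_ker h2 hO ha), neg_zero]
  refine h2.eq_of_projection_apply_eq hu2 ?_
  calc Q2 (G1 ((T1 ∘ₗ T2) u)) = Q2 a + Q2 (G1 (T1 e)) := by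
        rw [comp_apply, ← hae, map_add, map_add, h1.apply_map ha, map_add]
    _ = T2 u := by rw [hQe, add_zero, hQa]

theorem ker_comp_le (h1 : IsGreenOperator T1 S1 Q1 G1) (h2 : IsGreenOperator T2 S2 Q2 G2)
    (hO : (G2 ∘ₗ G1) ∘ₗ (T1 ∘ₗ T2) ∘ₗ (G2 ∘ₗ G1) = G2 ∘ₗ G1) :
    ker ((T1 ∘ₗ T2) ∘ₗ (G2 ∘ₗ G1)) ≤ ker Q1 ⊔ (S1 ⊓ ker Q2).map T1 := by
  intro f hf
  have hT1 : T1 (Q2 (G1 f)) = 0 := by simpa only [mem_ker, comp_apply, h2.map_apply] using hf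
  have hT1b : T1 (G1 (T1 (G1 f - Q2 (G1 f)))) = Q1 f := by
    rw [h1.map_apply, map_sub, hT1, sub_zero, h1.map_apply, ← Module.End.mul_apply,
      h1.isIdempotentElem.eq]
  refine mem_sup.2 ⟨f - Q1 f, h1.isIdempotentElem.sub_apply_mem_ker f, _, mem_map_of_mem
    ⟨h1.apply_mem _, h1.apply_map_sub_projection_mem_ker h2 hO (h1.apply_mem f)⟩, ?_⟩
  rw [hT1b, sub_add_cancel]

end IsGreenOperator

end Green

theorem Submodule.dualCoannihilator_map_dualMap {R M N : Type*} [CommRing R] [AddCommGroup M]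
    [Module R M] [AddCommGroup N] [Module R N] (T : M →ₗ[R] N) (C : Submodule R (Module.Dual R N)) :
    (C.map T.dualMap).dualCoannihilator = C.dualCoannihilator.comap T := by
  ext u
  simp [mem_dualCoannihilator]

theorem Subspace.dualCoannihilator_inf_dualAnnihilator {K V : Type*} [Field K] [AddCommGroup V]
    [Module K V] (B : Subspace K (Module.Dual K V)) [FiniteDimensional K B] (E : Subspace K V) :
    (B ⊓ E.dualAnnihilator).dualCoannihilator = B.dualCoannihilator ⊔ E := by
  rw [← dualCoannihilator_dualAnnihilator_eq (W := B), ← dualAnnihilator_sup_eq,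
    dualAnnihilator_dualCoannihilator_eq, dualCoannihilator_dualAnnihilator_eq]

theorem stmt_6_general {K U V W : Type*} [Field K]
    [AddCommGroup U] [Module K U] [AddCommGroup V] [Module K V]
    [AddCommGroup W] [Module K W]
    (T1 : V →ₗ[K] W) (T2 : U →ₗ[K] V)
    (B1 : Submodule K (Module.Dual K V)) (B2 : Submodule K (Module.Dual K U))
    [FiniteDimensional K B1]
    (E1 : Submodule K W) (E2 : Submodule K V)
    (hsemi1 : LinearMap.ker T1 ⊓ B1.dualCoannihilator = ⊥)
    (hsemi2 : LinearMap.ker T2 ⊓ B2.dualCoannihilator = ⊥)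
    (Q1 : W →ₗ[K] W) (hQ1 : Q1 ∘ₗ Q1 = Q1)
    (hQ1range : LinearMap.range Q1 = Submodule.map T1 B1.dualCoannihilator)
    (hQ1ker : LinearMap.ker Q1 = E1)
    (Q2 : V →ₗ[K] V) (hQ2 : Q2 ∘ₗ Q2 = Q2)
    (hQ2range : LinearMap.range Q2 = Submodule.map T2 B2.dualCoannihilator)
    (hQ2ker : LinearMap.ker Q2 = E2)
    (G1 : W →ₗ[K] V)
    (hG1 : ∀ f : W, G1 f ∈ B1.dualCoannihilator ∧ T1 (G1 f) = Q1 f)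
    (G2 : V →ₗ[K] U)
    (hG2 : ∀ f : V, G2 f ∈ B2.dualCoannihilator ∧ T2 (G2 f) = Q2 f) :
    ((G2 ∘ₗ G1) ∘ₗ (T1 ∘ₗ T2) ∘ₗ (G2 ∘ₗ G1) = G2 ∘ₗ G1) ↔
      ((LinearMap.ker (T1 ∘ₗ T2) ⊓
          (B2 ⊔ Submodule.map T2.dualMap (B1 ⊓ E2.dualAnnihilator)).dualCoannihilator = ⊥) ∧
        IsCompl
          (Submodule.map (T1 ∘ₗ T2)
            (B2 ⊔ Submodule.map T2.dualMap (B1 ⊓ E2.dualAnnihilator)).dualCoannihilator)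
          (E1 ⊔ Submodule.map T1 (B1.dualCoannihilator ⊓ E2)) ∧
        (∀ Q : W →ₗ[K] W, Q ∘ₗ Q = Q →
          LinearMap.range Q = Submodule.map (T1 ∘ₗ T2)
            (B2 ⊔ Submodule.map T2.dualMap (B1 ⊓ E2.dualAnnihilator)).dualCoannihilator →
          LinearMap.ker Q = E1 ⊔ Submodule.map T1 (B1.dualCoannihilator ⊓ E2) →
          ∀ f : W,
            (G2 ∘ₗ G1) f ∈
              (B2 ⊔ Submodule.map T2.dualMap (B1 ⊓ E2.dualAnnihilator)).dualCoannihilator ∧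
            (T1 ∘ₗ T2) ((G2 ∘ₗ G1) f) = Q f)) := by
  subst hQ1ker hQ2ker
  have h1 : IsGreenOperator T1 B1.dualCoannihilator Q1 G1 :=
    ⟨hsemi1, hQ1, hQ1range, fun f => (hG1 f).1, fun f => (hG1 f).2⟩
  have h2 : IsGreenOperator T2 B2.dualCoannihilator Q2 G2 :=
    ⟨hsemi2, hQ2, hQ2range, fun f => (hG2 f).1, fun f => (hG2 f).2⟩
  rw [dualCoannihilator_sup_eq, dualCoannihilator_map_dualMap,
    Subspace.dualCoannihilator_inf_dualAnnihilator]
  constructor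
  · intro hO
    have hrange := h1.range_comp_le h2
    have hinv := h1.leftInvOn_comp h2 hO
    have hker :
        ker ((T1 ∘ₗ T2) ∘ₗ (G2 ∘ₗ G1)) = ker Q1 ⊔ (B1.dualCoannihilator ⊓ ker Q2).map T1 :=
      (h1.ker_comp_le h2 hO).antisymm ((h1.le_ker_comp h2).trans (ker_le_ker_comp _ _))
    refine ⟨ker_inf_eq_bot_of_leftInvOn hinv,
      hker ▸ isCompl_map_ker_comp_of_leftInvOn hrange hinv, fun Q hQ hQr hQk f => ?_⟩
    have hG := isGreenOperator_of_leftInvOn hrange hinv hQ hQr (hQk.trans hker.symm)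
    exact ⟨hG.apply_mem f, hG.map_apply f⟩
  · rintro ⟨hsemi, hcompl, hgreen⟩
    have hQ := isIdempotentElem_projection hcompl
    have hG := hgreen _ hQ (range_projection hcompl) (ker_projection hcompl)
    exact IsGreenOperator.comp_comp_self ⟨hsemi, hQ, range_projection hcompl,
      fun f => (hG f).1, fun f => (hG f).2⟩

theorem stmt_6 {K U V W : Type*} [Field K]
    [AddCommGroup U] [Module K U] [AddCommGroup V] [Module K V]
    [AddCommGroup W] [Module K W]
    (T1 : V →ₗ[K] W) (T2 : U →ₗ[K] V)
    (hT1 : Function.Surjective T1) (hT2 : Function.Surjective T2)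
    (B1 : Submodule K (Module.Dual K V)) (B2 : Submodule K (Module.Dual K U))
    [FiniteDimensional K B1] [FiniteDimensional K B2]
    (E1 : Submodule K W) (E2 : Submodule K V)
    (hsemi1 : LinearMap.ker T1 ⊓ B1.dualCoannihilator = ⊥)
    (hreg1 : IsCompl (Submodule.map T1 B1.dualCoannihilator) E1)
    (hsemi2 : LinearMap.ker T2 ⊓ B2.dualCoannihilator = ⊥)
    (hreg2 : IsCompl (Submodule.map T2 B2.dualCoannihilator) E2)
    (Q1 : W →ₗ[K] W) (hQ1 : Q1 ∘ₗ Q1 = Q1)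
    (hQ1range : LinearMap.range Q1 = Submodule.map T1 B1.dualCoannihilator)
    (hQ1ker : LinearMap.ker Q1 = E1)
    (Q2 : V →ₗ[K] V) (hQ2 : Q2 ∘ₗ Q2 = Q2)
    (hQ2range : LinearMap.range Q2 = Submodule.map T2 B2.dualCoannihilator)
    (hQ2ker : LinearMap.ker Q2 = E2)
    (G1 : W →ₗ[K] V)
    (hG1 : ∀ f : W, G1 f ∈ B1.dualCoannihilator ∧ T1 (G1 f) = Q1 f)
    (G2 : V →ₗ[K] U)
    (hG2 : ∀ f : V, G2 f ∈ B2.dualCoannihilator ∧ T2 (G2 f) = Q2 f) :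
    ((G2 ∘ₗ G1) ∘ₗ (T1 ∘ₗ T2) ∘ₗ (G2 ∘ₗ G1) = G2 ∘ₗ G1) ↔
      ((LinearMap.ker (T1 ∘ₗ T2) ⊓
          (B2 ⊔ Submodule.map T2.dualMap (B1 ⊓ E2.dualAnnihilator)).dualCoannihilator = ⊥) ∧
        IsCompl
          (Submodule.map (T1 ∘ₗ T2)
            (B2 ⊔ Submodule.map T2.dualMap (B1 ⊓ E2.dualAnnihilator)).dualCoannihilator)
          (E1 ⊔ Submodule.map T1 (B1.dualCoannihilator ⊓ E2)) ∧
        (∀ Q : W →ₗ[K] W, Q ∘ₗ Q = Q →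
          LinearMap.range Q = Submodule.map (T1 ∘ₗ T2)
            (B2 ⊔ Submodule.map T2.dualMap (B1 ⊓ E2.dualAnnihilator)).dualCoannihilator →
          LinearMap.ker Q = E1 ⊔ Submodule.map T1 (B1.dualCoannihilator ⊓ E2) →
          ∀ f : W,
            (G2 ∘ₗ G1) f ∈
              (B2 ⊔ Submodule.map T2.dualMap (B1 ⊓ E2.dualAnnihilator)).dualCoannihilator ∧
            (T1 ∘ₗ T2) ((G2 ∘ₗ G1) f) = Q f)) :=
  stmt_6_general T1 T2 B1 B2 E1 E2 hsemi1 hsemi2 Q1 hQ1 hQ1range hQ1ker Q2 hQ2 hQ2range hQ2ker G1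
    hG1 G2 hG2
end

section
/- Let (T1, B1, E1) and (T2, B2, E2) be regular generalized boundary problems with T1 : V → W and T2 : U → V surjective K-linear maps, B1 ≤ V* and B2 ≤ U* finite-dimensional, and let G1 and G2 be their generalized Green's operators. Set C2 := (T2(B2⊥))⊥ ≤ V* and K1 := T1⁻¹(E1) ≤ V. Then G2 ∘ G1 is an outer inverse of T1 ∘ T2 if and only if C2 + (B1 ∩ E2⊥) ⊇ B1 ∩ (E2 ∩ K1)⊥. -/
/-- Bipolar-type lemma: a functional vanishing on the coannihilator of a
finite-dimensional subspace of the dual lies in that subspace. -/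
lemma aux_bipolar {K V : Type*} [Field K] [AddCommGroup V] [Module K V]
    (B : Submodule K (Module.Dual K V)) [FiniteDimensional K B]
    (γ : Module.Dual K V) (h : ∀ v ∈ B.dualCoannihilator, γ v = 0) : γ ∈ B := by
  classical
  have : Module.Free K B := Module.Free.of_divisionRing K B
  set b := Module.finBasis K B with hb
  set L : Fin (Module.finrank K B) → Module.Dual K V := fun i => (b i : Module.Dual K V) with hL
  have hspan : Submodule.span K (Set.range L) = B := by
    have : Set.range L = B.subtype '' (Set.range b) := by
      ext x; simp [L, Set.range_comp, Submodule.coe_subtype]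
    rw [this, ← Submodule.map_span, b.span_eq, Submodule.map_top, Submodule.range_subtype]
  have hker : ⨅ i, LinearMap.ker (L i) ≤ LinearMap.ker γ := by
    intro v hv
    have hv' : v ∈ B.dualCoannihilator := by
      rw [Submodule.mem_dualCoannihilator]
      intro φ hφ
      have hle : B ≤ LinearMap.ker ((Module.Dual.eval K V) v) := by
        rw [← hspan, Submodule.span_le]
        rintro _ ⟨i, rfl⟩
        have : L i v = 0 := by
          have := (Submodule.mem_iInf (fun i => LinearMap.ker (L i))).1 hv i
          simpa using this
        simpa [Module.Dual.eval_apply] using this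
      have := hle hφ
      simpa [Module.Dual.eval_apply] using this
    simpa using h v hv'
  rw [← hspan]
  exact mem_span_of_iInf_ker_le_ker hker

theorem stmt_7 {K U V W : Type*} [Field K]
    [AddCommGroup U] [Module K U] [AddCommGroup V] [Module K V]
    [AddCommGroup W] [Module K W]
    (T1 : V →ₗ[K] W) (T2 : U →ₗ[K] V)
    (hT1 : Function.Surjective T1) (hT2 : Function.Surjective T2)
    (B1 : Submodule K (Module.Dual K V)) (B2 : Submodule K (Module.Dual K U))
    [FiniteDimensional K B1] [FiniteDimensional K B2]
    (E1 : Submodule K W) (E2 : Submodule K V)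
    (hsemi1 : LinearMap.ker T1 ⊓ B1.dualCoannihilator = ⊥)
    (hreg1 : IsCompl (Submodule.map T1 B1.dualCoannihilator) E1)
    (hsemi2 : LinearMap.ker T2 ⊓ B2.dualCoannihilator = ⊥)
    (hreg2 : IsCompl (Submodule.map T2 B2.dualCoannihilator) E2)
    (Q1 : W →ₗ[K] W) (hQ1 : Q1 ∘ₗ Q1 = Q1)
    (hQ1range : LinearMap.range Q1 = Submodule.map T1 B1.dualCoannihilator)
    (hQ1ker : LinearMap.ker Q1 = E1)
    (Q2 : V →ₗ[K] V) (hQ2 : Q2 ∘ₗ Q2 = Q2)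
    (hQ2range : LinearMap.range Q2 = Submodule.map T2 B2.dualCoannihilator)
    (hQ2ker : LinearMap.ker Q2 = E2)
    (G1 : W →ₗ[K] V)
    (hG1 : ∀ f : W, G1 f ∈ B1.dualCoannihilator ∧ T1 (G1 f) = Q1 f)
    (G2 : V →ₗ[K] U)
    (hG2 : ∀ f : V, G2 f ∈ B2.dualCoannihilator ∧ T2 (G2 f) = Q2 f)
    (C2 : Submodule K (Module.Dual K V))
    (hC2 : C2 = (Submodule.map T2 B2.dualCoannihilator).dualAnnihilator)
    (K1 : Submodule K V)
    (hK1 : K1 = Submodule.comap T1 E1) :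
    ((G2 ∘ₗ G1) ∘ₗ (T1 ∘ₗ T2) ∘ₗ (G2 ∘ₗ G1) = G2 ∘ₗ G1) ↔
      (B1 ⊓ (E2 ⊓ K1).dualAnnihilator ≤ C2 ⊔ (B1 ⊓ E2.dualAnnihilator)) := by
  -- basic pointwise facts
  have hQ1idem : ∀ x : W, Q1 (Q1 x) = Q1 x := fun x => by
    have := DFunLike.congr_fun hQ1 x; simpa using this
  have hQ2idem : ∀ x : V, Q2 (Q2 x) = Q2 x := fun x => by
    have := DFunLike.congr_fun hQ2 x; simpa using this
  -- T1 is injective on B1⊥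
  have hinj1 : ∀ x, x ∈ LinearMap.ker T1 → x ∈ B1.dualCoannihilator → x = 0 := by
    intro x h1 h2
    have : x ∈ LinearMap.ker T1 ⊓ B1.dualCoannihilator := Submodule.mem_inf.2 ⟨h1, h2⟩
    rw [hsemi1] at this; simpa using this
  have hinj2 : ∀ x, x ∈ LinearMap.ker T2 → x ∈ B2.dualCoannihilator → x = 0 := by
    intro x h1 h2
    have : x ∈ LinearMap.ker T2 ⊓ B2.dualCoannihilator := Submodule.mem_inf.2 ⟨h1, h2⟩
    rw [hsemi2] at this; simpa using this
  -- G1 ∘ T1 = id on B1⊥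
  have hG1T1 : ∀ v ∈ B1.dualCoannihilator, G1 (T1 v) = v := by
    intro v hv
    have hmem : T1 v ∈ LinearMap.range Q1 := by
      rw [hQ1range]; exact ⟨v, hv, rfl⟩
    obtain ⟨x, hx⟩ := hmem
    have hfix : Q1 (T1 v) = T1 v := by rw [← hx, hQ1idem]
    have hker : G1 (T1 v) - v ∈ LinearMap.ker T1 := by
      rw [LinearMap.mem_ker, map_sub, (hG1 (T1 v)).2, hfix, sub_self]
    have hmem' : G1 (T1 v) - v ∈ B1.dualCoannihilator :=
      Submodule.sub_mem _ (hG1 (T1 v)).1 hv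
    exact sub_eq_zero.mp (hinj1 _ hker hmem')
  -- the pointwise form of the outer-inverse condition
  have key : ((G2 ∘ₗ G1) ∘ₗ (T1 ∘ₗ T2) ∘ₗ (G2 ∘ₗ G1) = G2 ∘ₗ G1) ↔
      (∀ v ∈ B1.dualCoannihilator, G1 (T1 (Q2 v)) - v ∈ E2) := by
    constructor
    · intro houter v hv
      have h1 : G1 (T1 v) = v := hG1T1 v hv
      have := DFunLike.congr_fun houter (T1 v)
      simp only [LinearMap.comp_apply] at this
      rw [h1, (hG2 v).2] at this
      -- this : G2 (G1 (T1 (Q2 v))) = G2 v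
      have hT2eq : Q2 (G1 (T1 (Q2 v))) = Q2 v := by
        have e1 := (hG2 (G1 (T1 (Q2 v)))).2
        have e2 := (hG2 v).2
        rw [← e1, this]; exact e2
      rw [← hQ2ker, LinearMap.mem_ker, map_sub, hT2eq, sub_self]
    · intro hstar
      ext f
      simp only [LinearMap.comp_apply]
      set v := G1 f with hvdef
      have hv : v ∈ B1.dualCoannihilator := (hG1 f).1
      rw [(hG2 v).2]
      have hz := hstar v hv
      rw [← hQ2ker, LinearMap.mem_ker, map_sub, sub_eq_zero] at hz
      -- hz : Q2 (G1 (T1 (Q2 v))) = Q2 v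
      have e1 := (hG2 (G1 (T1 (Q2 v)))).2
      have e2 := (hG2 v).2
      have hTeq : T2 (G2 (G1 (T1 (Q2 v)))) = T2 (G2 v) := by rw [e1, e2, hz]
      have hker : G2 (G1 (T1 (Q2 v))) - G2 v ∈ LinearMap.ker T2 := by
        rw [LinearMap.mem_ker, map_sub, hTeq, sub_self]
      have hmem : G2 (G1 (T1 (Q2 v))) - G2 v ∈ B2.dualCoannihilator :=
        Submodule.sub_mem _ (hG2 _).1 (hG2 _).1
      exact sub_eq_zero.mp (hinj2 _ hker hmem)
  rw [key]
  constructor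
  · -- pointwise condition implies the dual inclusion
    intro hstar β hβ
    obtain ⟨hβB1, hβann⟩ := Submodule.mem_inf.1 hβ
    rw [Submodule.mem_dualAnnihilator] at hβann
    set b : Module.Dual K V := β ∘ₗ Q2 with hbdef
    have hcC2 : β - b ∈ C2 := by
      rw [hC2, Submodule.mem_dualAnnihilator]
      intro w hw
      have hwr : w ∈ LinearMap.range Q2 := by rw [hQ2range]; exact hw
      obtain ⟨x, hx⟩ := hwr
      have hfix : Q2 w = w := by rw [← hx, hQ2idem]
      simp [b, hfix]
    have hbB1 : b ∈ B1 := by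
      apply aux_bipolar
      intro v hv
      set g := G1 (T1 (Q2 v)) with hgdef
      have hgB : g ∈ B1.dualCoannihilator := (hG1 _).1
      have hβg : β g = 0 := (Submodule.mem_dualCoannihilator g).1 hgB β hβB1
      have hE2 : Q2 v - g ∈ E2 := by
        have h1 : Q2 v - v ∈ E2 := by
          rw [← hQ2ker, LinearMap.mem_ker, map_sub, hQ2idem, sub_self]
        have h2 : g - v ∈ E2 := hstar v hv
        have : Q2 v - g = (Q2 v - v) - (g - v) := by abel
        rw [this]; exact Submodule.sub_mem _ h1 h2
      have hK1m : Q2 v - g ∈ K1 := by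
        rw [hK1, Submodule.mem_comap, map_sub, hgdef, (hG1 (T1 (Q2 v))).2, ← hQ1ker]
        rw [LinearMap.mem_ker, map_sub, hQ1idem, sub_self]
      have : β (Q2 v - g) = 0 := hβann _ (Submodule.mem_inf.2 ⟨hE2, hK1m⟩)
      have hcalc : β (Q2 v) = β (Q2 v - g) + β g := by rw [map_sub]; ring
      simp [b, hcalc, this, hβg]
    have hbE2 : b ∈ E2.dualAnnihilator := by
      rw [Submodule.mem_dualAnnihilator]
      intro z hz
      rw [← hQ2ker, LinearMap.mem_ker] at hz
      simp [b, hz]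
    have : β = (β - b) + b := by abel
    rw [this]
    exact Submodule.add_mem_sup hcC2 (Submodule.mem_inf.2 ⟨hbB1, hbE2⟩)
  · -- dual inclusion implies the pointwise condition
    intro hincl v hv
    set g := G1 (T1 (Q2 v)) with hgdef
    rw [← hQ2ker, LinearMap.mem_ker, map_sub, sub_eq_zero]
    -- goal : Q2 g = Q2 v
    rw [← sub_eq_zero, ← Module.forall_dual_apply_eq_zero_iff K]
    intro β
    set γ : Module.Dual K V := β ∘ₗ Q2 with hγdef
    set δ : Module.Dual K V := γ - γ ∘ₗ (G1 ∘ₗ T1) with hδdef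
    have hδB1 : δ ∈ B1 := by
      apply aux_bipolar
      intro w hw
      simp [δ, hG1T1 w hw]
    have hδann : δ ∈ (E2 ⊓ K1).dualAnnihilator := by
      rw [Submodule.mem_dualAnnihilator]
      intro z hz
      obtain ⟨hzE2, hzK1⟩ := Submodule.mem_inf.1 hz
      have hγz : γ z = 0 := by
        rw [← hQ2ker, LinearMap.mem_ker] at hzE2
        simp [γ, hzE2]
      have hGz : G1 (T1 z) = 0 := by
        have hTz : T1 z ∈ E1 := by rw [hK1, Submodule.mem_comap] at hzK1; exact hzK1
        have : T1 (G1 (T1 z)) = 0 := by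
          rw [(hG1 (T1 z)).2, ← LinearMap.mem_ker, hQ1ker]; exact hTz
        exact hinj1 _ (LinearMap.mem_ker.2 this) (hG1 (T1 z)).1
      simp [δ, hγz, hGz]
    have hδmem := hincl (Submodule.mem_inf.2 ⟨hδB1, hδann⟩)
    obtain ⟨c, hc, b, hb, hcb⟩ := Submodule.mem_sup.1 hδmem
    obtain ⟨hbB1, hbE2⟩ := Submodule.mem_inf.1 hb
    -- evaluate δ at Q2 v
    have hcQ2v : c (Q2 v) = 0 := by
      rw [hC2, Submodule.mem_dualAnnihilator] at hc
      apply hc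
      rw [← hQ2range]; exact ⟨v, rfl⟩
    have hbQ2v : b (Q2 v) = 0 := by
      have hvb : b v = 0 := (Submodule.mem_dualCoannihilator v).1 hv b hbB1
      have h1 : v - Q2 v ∈ E2 := by
        rw [← hQ2ker, LinearMap.mem_ker, map_sub, hQ2idem, sub_self]
      rw [Submodule.mem_dualAnnihilator] at hbE2
      have h2 : b (v - Q2 v) = 0 := hbE2 _ h1
      rw [map_sub, sub_eq_zero] at h2
      rw [← h2]; exact hvb
    have hδQ2v : δ (Q2 v) = 0 := by
      rw [← hcb]; simp [hcQ2v, hbQ2v]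
    have hexp : δ (Q2 v) = γ (Q2 v) - γ g := by simp [δ, g]
    have hγQ2v : γ (Q2 v) = γ v := by simp [γ, hQ2idem]
    have hγg : γ g = γ v := by
      have h3 : γ (Q2 v) - γ g = 0 := by rw [← hexp]; exact hδQ2v
      have h4 := sub_eq_zero.mp h3
      rw [hγQ2v] at h4
      exact h4.symm
    have : β (Q2 g) - β (Q2 v) = γ g - γ v := by simp [γ]
    rw [map_sub, this, hγg, sub_self]
end

section
/- Let (T1, B1, E1) and (T2, B2, E2) be regular generalized boundary problems with T1 : V → W and T2 : U → V surjective K-linear maps, B1 ≤ V* and B2 ≤ U* finite-dimensional, and let G1 and G2 be their generalized Green's operators. Set C2 := (T2(B2⊥))⊥ ≤ V* and K1 := T1⁻¹(E1) ≤ V. Then G2 ∘ G1 is an outer inverse of T1 ∘ T2 if and only if B1 ⊇ C2 ∩ (E2 ∩ B1⊥)⊥ ∩ (E2 ∩ K1)⊥. -/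
theorem stmt_8 {K U V W : Type*} [Field K]
    [AddCommGroup U] [Module K U] [AddCommGroup V] [Module K V]
    [AddCommGroup W] [Module K W]
    (T1 : V →ₗ[K] W) (T2 : U →ₗ[K] V)
    (hT1 : Function.Surjective T1) (hT2 : Function.Surjective T2)
    (B1 : Submodule K (Module.Dual K V)) (B2 : Submodule K (Module.Dual K U))
    [FiniteDimensional K B1] [FiniteDimensional K B2]
    (E1 : Submodule K W) (E2 : Submodule K V)
    (hsemi1 : LinearMap.ker T1 ⊓ B1.dualCoannihilator = ⊥)
    (hreg1 : IsCompl (Submodule.map T1 B1.dualCoannihilator) E1)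
    (hsemi2 : LinearMap.ker T2 ⊓ B2.dualCoannihilator = ⊥)
    (hreg2 : IsCompl (Submodule.map T2 B2.dualCoannihilator) E2)
    (Q1 : W →ₗ[K] W) (hQ1 : Q1 ∘ₗ Q1 = Q1)
    (hQ1range : LinearMap.range Q1 = Submodule.map T1 B1.dualCoannihilator)
    (hQ1ker : LinearMap.ker Q1 = E1)
    (Q2 : V →ₗ[K] V) (hQ2 : Q2 ∘ₗ Q2 = Q2)
    (hQ2range : LinearMap.range Q2 = Submodule.map T2 B2.dualCoannihilator)
    (hQ2ker : LinearMap.ker Q2 = E2)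
    (G1 : W →ₗ[K] V)
    (hG1 : ∀ f : W, G1 f ∈ B1.dualCoannihilator ∧ T1 (G1 f) = Q1 f)
    (G2 : V →ₗ[K] U)
    (hG2 : ∀ f : V, G2 f ∈ B2.dualCoannihilator ∧ T2 (G2 f) = Q2 f)
    (C2 : Submodule K (Module.Dual K V))
    (hC2 : C2 = (Submodule.map T2 B2.dualCoannihilator).dualAnnihilator)
    (K1 : Submodule K V)
    (hK1 : K1 = Submodule.comap T1 E1) :
    ((G2 ∘ₗ G1) ∘ₗ (T1 ∘ₗ T2) ∘ₗ (G2 ∘ₗ G1) = G2 ∘ₗ G1) ↔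
      (C2 ⊓ (E2 ⊓ B1.dualCoannihilator).dualAnnihilator ⊓ (E2 ⊓ K1).dualAnnihilator ≤ B1) := by
  classical
  set R2 : Submodule K V := Submodule.map T2 B2.dualCoannihilator with hR2
  -- uniqueness from semi-regularity
  have uniq1 : ∀ x y : V, x ∈ B1.dualCoannihilator → y ∈ B1.dualCoannihilator →
      T1 x = T1 y → x = y := by
    intro x y hx hy hxy
    have hmem : x - y ∈ LinearMap.ker T1 ⊓ B1.dualCoannihilator :=
      ⟨by simp [LinearMap.mem_ker, map_sub, hxy], Submodule.sub_mem _ hx hy⟩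
    rw [hsemi1, Submodule.mem_bot, sub_eq_zero] at hmem
    exact hmem
  have uniq2 : ∀ x y : U, x ∈ B2.dualCoannihilator → y ∈ B2.dualCoannihilator →
      T2 x = T2 y → x = y := by
    intro x y hx hy hxy
    have hmem : x - y ∈ LinearMap.ker T2 ⊓ B2.dualCoannihilator :=
      ⟨by simp [LinearMap.mem_ker, map_sub, hxy], Submodule.sub_mem _ hx hy⟩
    rw [hsemi2, Submodule.mem_bot, sub_eq_zero] at hmem
    exact hmem
  have hQ1idem : ∀ w : W, Q1 (Q1 w) = Q1 w := fun w => by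
    have := LinearMap.ext_iff.mp hQ1 w; simpa using this
  have hQ2idem : ∀ v : V, Q2 (Q2 v) = Q2 v := fun v => by
    have := LinearMap.ext_iff.mp hQ2 v; simpa using this
  -- Q1 fixes T1-images of B1⊥
  have hQ1fix : ∀ v : V, v ∈ B1.dualCoannihilator → Q1 (T1 v) = T1 v := by
    intro v hv
    have : T1 v ∈ LinearMap.range Q1 := by
      rw [hQ1range]; exact ⟨v, hv, rfl⟩
    obtain ⟨u, hu⟩ := this
    rw [← hu, hQ1idem]
  have hQ2fix : ∀ r : V, r ∈ R2 → Q2 r = r := by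
    intro r hr
    have : r ∈ LinearMap.range Q2 := by rw [hQ2range]; exact hr
    obtain ⟨u, hu⟩ := this
    rw [← hu, hQ2idem]
  -- G1 ∘ T1 fixes B1⊥
  have hG1fix : ∀ v : V, v ∈ B1.dualCoannihilator → G1 (T1 v) = v := by
    intro v hv
    exact uniq1 _ _ (hG1 _).1 hv (by rw [(hG1 _).2, hQ1fix v hv])
  -- G1 kills elements whose Q1-image is zero
  have hG1zero : ∀ x : W, Q1 x = 0 → G1 x = 0 := by
    intro x hx
    exact uniq1 _ _ (hG1 _).1 (zero_mem _) (by rw [(hG1 _).2, hx, map_zero])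
  -- G1 ∘ T1 kills K1
  have hG1K1 : ∀ c : V, c ∈ K1 → G1 (T1 c) = 0 := by
    intro c hc
    rw [hK1, Submodule.mem_comap, ← hQ1ker, LinearMap.mem_ker] at hc
    exact hG1zero _ hc
  -- G2 kills E2
  have hG2E2 : ∀ x : V, x ∈ E2 → G2 x = 0 := by
    intro x hx
    have hq : Q2 x = 0 := by rwa [← LinearMap.mem_ker, hQ2ker]
    exact uniq2 _ _ (hG2 _).1 (zero_mem _) (by rw [(hG2 _).2, hq, map_zero])
  -- G2 x = 0 implies x ∈ E2
  have hG2ker : ∀ x : V, G2 x = 0 → x ∈ E2 := by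
    intro x hx
    have : Q2 x = 0 := by rw [← (hG2 x).2, hx, map_zero]
    rwa [← LinearMap.mem_ker, hQ2ker] at this
  -- x - Q2 x ∈ E2
  have hQ2sub : ∀ x : V, x - Q2 x ∈ E2 := by
    intro x
    rw [← hQ2ker, LinearMap.mem_ker, map_sub, hQ2idem, sub_self]
  set S : Submodule K V := R2 ⊔ (E2 ⊓ B1.dualCoannihilator) ⊔ (E2 ⊓ K1) with hS
  -- the RHS is equivalent to S.dualAnnihilator ≤ B1
  have hRHS : (C2 ⊓ (E2 ⊓ B1.dualCoannihilator).dualAnnihilator ⊓ (E2 ⊓ K1).dualAnnihilator ≤ B1)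
      ↔ S.dualAnnihilator ≤ B1 := by
    rw [hC2, hS, Submodule.dualAnnihilator_sup_eq, Submodule.dualAnnihilator_sup_eq]
  rw [hRHS]
  constructor
  · -- outer inverse ⇒ inclusion
    intro h
    have hstar : B1.dualCoannihilator ≤ S := by
      intro v hv
      -- apply the identity at f = T1 v
      have hid := LinearMap.ext_iff.mp h (T1 v)
      simp only [LinearMap.comp_apply] at hid
      rw [hG1fix v hv, (hG2 v).2] at hid
      -- hid : G2 (G1 (T1 (Q2 v))) = G2 v
      have hdiff : G1 (T1 (Q2 v)) - v ∈ E2 := by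
        apply hG2ker
        rw [map_sub, hid, sub_self]
      -- decomposition
      set p : V := G1 (T1 (Q2 v)) with hp
      have hbE2 : Q2 v - p ∈ E2 := by
        have : Q2 v - p = -((v - Q2 v) + (p - v)) := by abel
        rw [this]
        exact Submodule.neg_mem _ (Submodule.add_mem _ (hQ2sub v)
          (by simpa [hp] using hdiff))
      have hbK1 : Q2 v - p ∈ K1 := by
        rw [hK1, Submodule.mem_comap, map_sub, hp, (hG1 _).2, ← hQ1ker,
          LinearMap.mem_ker, map_sub, hQ1idem, sub_self]
      have haB1 : v - p ∈ B1.dualCoannihilator :=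
        Submodule.sub_mem _ hv (hG1 _).1
      have haE2 : v - p ∈ E2 := by
        have : v - p = -(p - v) := by abel
        rw [this]
        exact Submodule.neg_mem _ (by simpa [hp] using hdiff)
      have hvsum : v = Q2 v + (v - p) + -(Q2 v - p) := by abel
      rw [hvsum]
      refine Submodule.add_mem _ (Submodule.add_mem _ ?_ ?_) ?_
      · exact Submodule.mem_sup_left (Submodule.mem_sup_left
          (hQ2range ▸ LinearMap.mem_range_self Q2 v : Q2 v ∈ R2))
      · exact Submodule.mem_sup_left (Submodule.mem_sup_right ⟨haE2, haB1⟩)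
      · exact Submodule.mem_sup_right (Submodule.neg_mem _ ⟨hbE2, hbK1⟩)
    calc S.dualAnnihilator ≤ B1.dualCoannihilator.dualAnnihilator :=
          Submodule.dualAnnihilator_anti hstar
      _ = B1 := Subspace.dualCoannihilator_dualAnnihilator_eq
  · -- inclusion ⇒ outer inverse
    intro h
    have hstar : B1.dualCoannihilator ≤ S := by
      calc B1.dualCoannihilator ≤ S.dualAnnihilator.dualCoannihilator :=
            Submodule.dualCoannihilator_anti h
        _ = S := Subspace.dualAnnihilator_dualCoannihilator_eq
    ext f
    simp only [LinearMap.comp_apply]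
    rw [(hG2 _).2]
    -- goal : G2 (G1 (T1 (Q2 (G1 f)))) = G2 (G1 f)
    set v : V := G1 f with hv
    have hvB1 : v ∈ B1.dualCoannihilator := (hG1 f).1
    obtain ⟨x, hx, c, hc, hvxc⟩ := Submodule.mem_sup.mp (hstar hvB1)
    obtain ⟨r, hr, a, ha, hxra⟩ := Submodule.mem_sup.mp hx
    -- v = r + a + c
    have hQ2v : Q2 v = r := by
      have hQ2a : Q2 a = 0 := by
        rw [← LinearMap.mem_ker, hQ2ker]; exact ha.1
      have hQ2c : Q2 c = 0 := by
        rw [← LinearMap.mem_ker, hQ2ker]; exact hc.1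
      rw [← hvxc, ← hxra, map_add, map_add, hQ2fix r hr, hQ2a, hQ2c, add_zero, add_zero]
    have hG1T1r : G1 (T1 r) = v - a := by
      have hrva : r = v - a - c := by rw [← hvxc, ← hxra]; abel
      rw [hrva, map_sub, map_sub, map_sub, map_sub, hG1fix v hvB1,
        hG1fix a ha.2, hG1K1 c hc.2, sub_zero]
    rw [hQ2v, hG1T1r, map_sub, hG2E2 a ha.1, sub_zero]
end

section
/- Let (T1, B1, E1) and (T2, B2, E2) be regular generalized boundary problems with T1 : V → W and T2 : U → V surjective K-linear maps, B1 ≤ V* and B2 ≤ U* finite-dimensional, and let G1 and G2 be their generalized Green's operators. Set C2 := (T2(B2⊥))⊥ ≤ V* and K1 := T1⁻¹(E1) ≤ V. Then G2 ∘ G1 is an outer inverse of T1 ∘ T2 if and only if K1 + (E2 ∩ B1⊥) ⊇ E2 ∩ (B1 ∩ C2)⊥. (Moreover the sum on the left is automatically direct: K1 ∩ E2 ∩ B1⊥ = {0}.) -/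
theorem stmt_9 {K U V W : Type*} [Field K]
    [AddCommGroup U] [Module K U] [AddCommGroup V] [Module K V]
    [AddCommGroup W] [Module K W]
    (T1 : V →ₗ[K] W) (T2 : U →ₗ[K] V)
    (hT1 : Function.Surjective T1) (hT2 : Function.Surjective T2)
    (B1 : Submodule K (Module.Dual K V)) (B2 : Submodule K (Module.Dual K U))
    [FiniteDimensional K B1] [FiniteDimensional K B2]
    (E1 : Submodule K W) (E2 : Submodule K V)
    (hsemi1 : LinearMap.ker T1 ⊓ B1.dualCoannihilator = ⊥)
    (hreg1 : IsCompl (Submodule.map T1 B1.dualCoannihilator) E1)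
    (hsemi2 : LinearMap.ker T2 ⊓ B2.dualCoannihilator = ⊥)
    (hreg2 : IsCompl (Submodule.map T2 B2.dualCoannihilator) E2)
    (Q1 : W →ₗ[K] W) (hQ1 : Q1 ∘ₗ Q1 = Q1)
    (hQ1range : LinearMap.range Q1 = Submodule.map T1 B1.dualCoannihilator)
    (hQ1ker : LinearMap.ker Q1 = E1)
    (Q2 : V →ₗ[K] V) (hQ2 : Q2 ∘ₗ Q2 = Q2)
    (hQ2range : LinearMap.range Q2 = Submodule.map T2 B2.dualCoannihilator)
    (hQ2ker : LinearMap.ker Q2 = E2)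
    (G1 : W →ₗ[K] V)
    (hG1 : ∀ f : W, G1 f ∈ B1.dualCoannihilator ∧ T1 (G1 f) = Q1 f)
    (G2 : V →ₗ[K] U)
    (hG2 : ∀ f : V, G2 f ∈ B2.dualCoannihilator ∧ T2 (G2 f) = Q2 f)
    (C2 : Submodule K (Module.Dual K V))
    (hC2 : C2 = (Submodule.map T2 B2.dualCoannihilator).dualAnnihilator)
    (K1 : Submodule K V)
    (hK1 : K1 = Submodule.comap T1 E1) :
    (((G2 ∘ₗ G1) ∘ₗ (T1 ∘ₗ T2) ∘ₗ (G2 ∘ₗ G1) = G2 ∘ₗ G1) ↔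
      (E2 ⊓ (B1 ⊓ C2).dualCoannihilator ≤ K1 ⊔ (E2 ⊓ B1.dualCoannihilator))) ∧
    -- moreover, the sum on the left is automatically direct
    K1 ⊓ (E2 ⊓ B1.dualCoannihilator) = ⊥ := by
  -- basic consequences of the regularity hypotheses
  have hsub1 : ∀ x : V, T1 x = 0 → x ∈ B1.dualCoannihilator → x = 0 := by
    intro x h1 h2
    have hx : x ∈ (⊥ : Submodule K V) := by
      rw [← hsemi1]; exact Submodule.mem_inf.mpr ⟨LinearMap.mem_ker.mpr h1, h2⟩
    simpa using hx
  have hsub2 : ∀ x : U, T2 x = 0 → x ∈ B2.dualCoannihilator → x = 0 := by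
    intro x h1 h2
    have hx : x ∈ (⊥ : Submodule K U) := by
      rw [← hsemi2]; exact Submodule.mem_inf.mpr ⟨LinearMap.mem_ker.mpr h1, h2⟩
    simpa using hx
  -- Q1, Q2 fix their ranges
  have hQ1fix : ∀ w ∈ Submodule.map T1 B1.dualCoannihilator, Q1 w = w := by
    intro w hw
    rw [← hQ1range] at hw
    obtain ⟨x, rfl⟩ := hw
    simpa using LinearMap.congr_fun hQ1 x
  have hQ2fix : ∀ v ∈ Submodule.map T2 B2.dualCoannihilator, Q2 v = v := by
    intro v hv
    rw [← hQ2range] at hv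
    obtain ⟨x, rfl⟩ := hv
    simpa using LinearMap.congr_fun hQ2 x
  -- P := G1 ∘ T1 fixes B1⊥
  have hPfix : ∀ u ∈ B1.dualCoannihilator, G1 (T1 u) = u := by
    intro u hu
    have hq : Q1 (T1 u) = T1 u := hQ1fix _ ⟨u, hu, rfl⟩
    have h0 : G1 (T1 u) - u = 0 := by
      apply hsub1
      · rw [map_sub, (hG1 (T1 u)).2, hq, sub_self]
      · exact Submodule.sub_mem _ (hG1 (T1 u)).1 hu
    exact sub_eq_zero.mp h0
  -- P kills K1
  have hPk : ∀ x ∈ K1, G1 (T1 x) = 0 := by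
    intro x hx
    rw [hK1, Submodule.mem_comap, ← hQ1ker, LinearMap.mem_ker] at hx
    exact hsub1 _ (by rw [(hG1 (T1 x)).2, hx]) (hG1 (T1 x)).1
  -- x - P x ∈ K1
  have hK1mem : ∀ x : V, x - G1 (T1 x) ∈ K1 := by
    intro x
    rw [hK1, Submodule.mem_comap, ← hQ1ker, LinearMap.mem_ker]
    have := LinearMap.congr_fun hQ1 (T1 x)
    simp only [LinearMap.comp_apply] at this
    rw [map_sub, map_sub, (hG1 (T1 x)).2, this, sub_self]
  -- kernel of G2 is E2
  have hE2iff : ∀ x : V, G2 x = 0 ↔ x ∈ E2 := by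
    intro x
    constructor
    · intro h
      rw [← hQ2ker, LinearMap.mem_ker, ← (hG2 x).2, h, map_zero]
    · intro h
      rw [← hQ2ker, LinearMap.mem_ker] at h
      exact hsub2 _ (by rw [(hG2 x).2, h]) (hG2 x).1
  -- elements of B1⊥ minus their Q2 projection lie in E2
  have hvE2gen : ∀ u : V, u - Q2 u ∈ E2 := by
    intro u
    rw [← hQ2ker, LinearMap.mem_ker, map_sub]
    have := LinearMap.congr_fun hQ2 u
    simp only [LinearMap.comp_apply] at this
    rw [this, sub_self]
  -- the key duality identity: (B1 ⊓ C2)⊥ = B1⊥ ⊔ T2(B2⊥)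
  have hco : (B1 ⊓ C2).dualCoannihilator
      = B1.dualCoannihilator ⊔ Submodule.map T2 B2.dualCoannihilator := by
    rw [hC2]
    conv_rhs => rw [← Subspace.dualAnnihilator_dualCoannihilator_eq
      (W := B1.dualCoannihilator ⊔ Submodule.map T2 B2.dualCoannihilator)]
    rw [Submodule.dualAnnihilator_sup_eq, Subspace.dualCoannihilator_dualAnnihilator_eq]
  -- the outer-inverse condition, pointwise on B1⊥
  have houter : ((G2 ∘ₗ G1) ∘ₗ (T1 ∘ₗ T2) ∘ₗ (G2 ∘ₗ G1) = G2 ∘ₗ G1) ↔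
      ∀ u ∈ B1.dualCoannihilator, Q2 u - G1 (T1 (Q2 u)) ∈ E2 := by
    constructor
    · intro h u hu
      have hf := LinearMap.congr_fun h (T1 u)
      simp only [LinearMap.comp_apply] at hf
      rw [hPfix u hu, (hG2 u).2] at hf
      -- hf : G2 (G1 (T1 (Q2 u))) = G2 u
      have h1 : G1 (T1 (Q2 u)) - u ∈ E2 := by
        rw [← hE2iff, map_sub, hf, sub_self]
      have h2 : u - Q2 u ∈ E2 := hvE2gen u
      have h3 : Q2 u - G1 (T1 (Q2 u)) = -((G1 (T1 (Q2 u)) - u) + (u - Q2 u)) := by abel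
      rw [h3]
      exact Submodule.neg_mem _ (Submodule.add_mem _ h1 h2)
    · intro h
      ext f
      simp only [LinearMap.comp_apply]
      rw [(hG2 (G1 f)).2]
      have h1 := h (G1 f) (hG1 f).1
      have h2 : G1 f - Q2 (G1 f) ∈ E2 := hvE2gen (G1 f)
      have h3 : G1 (T1 (Q2 (G1 f))) - G1 f
          = -((Q2 (G1 f) - G1 (T1 (Q2 (G1 f)))) + (G1 f - Q2 (G1 f))) := by abel
      have h4 : G1 (T1 (Q2 (G1 f))) - G1 f ∈ E2 := by
        rw [h3]; exact Submodule.neg_mem _ (Submodule.add_mem _ h1 h2)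
      have h5 : G2 (G1 (T1 (Q2 (G1 f))) - G1 f) = 0 := (hE2iff _).mpr h4
      rw [map_sub, sub_eq_zero] at h5
      exact h5
  -- the pointwise condition is equivalent to the subspace inclusion
  have hiff2 : (∀ u ∈ B1.dualCoannihilator, Q2 u - G1 (T1 (Q2 u)) ∈ E2) ↔
      (E2 ⊓ (B1 ⊓ C2).dualCoannihilator ≤ K1 ⊔ (E2 ⊓ B1.dualCoannihilator)) := by
    constructor
    · intro h v hv
      obtain ⟨hvE2, hvco⟩ := Submodule.mem_inf.mp hv
      rw [hco] at hvco
      obtain ⟨b, hb, r, hr, hbr⟩ := Submodule.mem_sup.mp hvco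
      have hQ2v : Q2 v = 0 := by
        rw [← hQ2ker, LinearMap.mem_ker] at hvE2; exact hvE2
      have hQ2r : Q2 r = r := hQ2fix r hr
      have hQ2b : Q2 b = -r := by
        have h0 : Q2 b + Q2 r = 0 := by rw [← map_add, hbr, hQ2v]
        rw [hQ2r] at h0
        exact eq_neg_of_add_eq_zero_left h0
      have hstar := h b hb
      rw [hQ2b] at hstar
      have hrP : r - G1 (T1 r) ∈ E2 := by
        have hx : r - G1 (T1 r) = -(-r - G1 (T1 (-r))) := by
          rw [map_neg, map_neg]; abel
        rw [hx]
        exact Submodule.neg_mem _ hstar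
      have hrK : r - G1 (T1 r) ∈ K1 := hK1mem r
      have hPrB : G1 (T1 r) ∈ B1.dualCoannihilator := (hG1 _).1
      have hbP_E2 : b + G1 (T1 r) ∈ E2 := by
        have hx : b + G1 (T1 r) = v - (r - G1 (T1 r)) := by rw [← hbr]; abel
        rw [hx]
        exact Submodule.sub_mem _ hvE2 hrP
      exact Submodule.mem_sup.mpr ⟨r - G1 (T1 r), hrK, b + G1 (T1 r),
        Submodule.mem_inf.mpr ⟨hbP_E2, Submodule.add_mem _ hb hPrB⟩,
        by rw [← hbr]; abel⟩
    · intro h u hu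
      have hQ2uR : Q2 u ∈ Submodule.map T2 B2.dualCoannihilator := by
        rw [← hQ2range]; exact LinearMap.mem_range_self Q2 u
      have hvE2 : u - Q2 u ∈ E2 := hvE2gen u
      have hvco : u - Q2 u ∈ (B1 ⊓ C2).dualCoannihilator := by
        rw [hco]
        exact Submodule.mem_sup.mpr ⟨u, hu, -(Q2 u), Submodule.neg_mem _ hQ2uR, by abel⟩
      obtain ⟨k, hk, e, he, hke⟩ :=
        Submodule.mem_sup.mp (h (Submodule.mem_inf.mpr ⟨hvE2, hvco⟩))
      obtain ⟨heE2, heB⟩ := Submodule.mem_inf.mp he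
      have hPk' : G1 (T1 k) = 0 := hPk k hk
      have hPe : G1 (T1 e) = e := hPfix e heB
      have hPu : G1 (T1 u) = u := hPfix u hu
      have hkey : e = u - G1 (T1 (Q2 u)) := by
        have hx := congrArg (fun x : V => G1 (T1 x)) hke
        simp only [map_add, map_sub] at hx
        rwa [hPk', hPe, hPu, zero_add] at hx
      have hmain : G1 (T1 (Q2 u)) = u - e := by rw [hkey]; abel
      rw [hmain]
      have hx : Q2 u - (u - e) = e - (u - Q2 u) := by abel
      rw [hx]
      exact Submodule.sub_mem _ heE2 hvE2
  refine ⟨houter.trans hiff2, ?_⟩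
  rw [eq_bot_iff]
  intro x hx
  obtain ⟨hxK, hxE⟩ := Submodule.mem_inf.mp hx
  obtain ⟨_, hxB⟩ := Submodule.mem_inf.mp hxE
  have h1 : G1 (T1 x) = 0 := hPk x hxK
  have h2 : G1 (T1 x) = x := hPfix x hxB
  rw [Submodule.mem_bot, ← h2, h1]
end

section
/- Let (T1, B1, E1) and (T2, B2, E2) be regular generalized boundary problems with T1 : V → W and T2 : U → V surjective K-linear maps, B1 ≤ V* and B2 ≤ U* finite-dimensional, and let G1 and G2 be their generalized Green's operators. Set C2 := (T2(B2⊥))⊥ ≤ V* and K1 := T1⁻¹(E1) ≤ V. Then G2 ∘ G1 is an outer inverse of T1 ∘ T2 if and only if E2 ⊇ K1 ∩ (B1 ∩ E2⊥)⊥ ∩ (B1 ∩ C2)⊥. -/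
lemma lemL {K V : Type*} [Field K] [AddCommGroup V] [Module K V]
    (Γ : Submodule K (Module.Dual K V)) [FiniteDimensional K Γ]
    (S : Submodule K V) (v : V)
    (hv : ∀ β ∈ Γ ⊓ S.dualAnnihilator, β v = 0) :
    ∃ s ∈ S, ∀ β ∈ Γ, β v = β s := by
  haveI : Module.Free K Γ := Module.Free.of_divisionRing K Γ
  haveI : Module.IsReflexive K Γ := Module.IsReflexive.of_finite_of_free K Γ
  let L : V →ₗ[K] Module.Dual K Γ :=
    Γ.subtype.dualMap ∘ₗ Module.Dual.eval K V
  have hL : ∀ (x : V) (β : Γ), L x β = (β : Module.Dual K V) x := fun x β => rfl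
  have hmem : L v ∈ Submodule.map L S := by
    rw [← Subspace.dualAnnihilator_dualCoannihilator_eq (W := Submodule.map L S),
      Submodule.mem_dualCoannihilator]
    intro φ hφ
    obtain ⟨β, rfl⟩ := (Module.evalEquiv K Γ).surjective φ
    have hβS : (β : Module.Dual K V) ∈ S.dualAnnihilator := by
      rw [Submodule.mem_dualAnnihilator]
      intro s hs
      have h := (Submodule.mem_dualAnnihilator _).mp hφ (L s)
        (Submodule.mem_map_of_mem hs)
      simpa [hL] using h
    have hv' := hv β ⟨β.2, hβS⟩
    simpa [hL] using hv'
  obtain ⟨s, hs, hLs⟩ := hmem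
  refine ⟨s, hs, fun β hβ => ?_⟩
  have := congrFun (congrArg (fun f => f.toFun) hLs) ⟨β, hβ⟩
  simpa [hL] using this.symm

theorem stmt_10 {K U V W : Type*} [Field K]
    [AddCommGroup U] [Module K U] [AddCommGroup V] [Module K V]
    [AddCommGroup W] [Module K W]
    (T1 : V →ₗ[K] W) (T2 : U →ₗ[K] V)
    (hT1 : Function.Surjective T1) (hT2 : Function.Surjective T2)
    (B1 : Submodule K (Module.Dual K V)) (B2 : Submodule K (Module.Dual K U))
    [FiniteDimensional K B1] [FiniteDimensional K B2]
    (E1 : Submodule K W) (E2 : Submodule K V)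
    (hsemi1 : LinearMap.ker T1 ⊓ B1.dualCoannihilator = ⊥)
    (hreg1 : IsCompl (Submodule.map T1 B1.dualCoannihilator) E1)
    (hsemi2 : LinearMap.ker T2 ⊓ B2.dualCoannihilator = ⊥)
    (hreg2 : IsCompl (Submodule.map T2 B2.dualCoannihilator) E2)
    (Q1 : W →ₗ[K] W) (hQ1 : Q1 ∘ₗ Q1 = Q1)
    (hQ1range : LinearMap.range Q1 = Submodule.map T1 B1.dualCoannihilator)
    (hQ1ker : LinearMap.ker Q1 = E1)
    (Q2 : V →ₗ[K] V) (hQ2 : Q2 ∘ₗ Q2 = Q2)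
    (hQ2range : LinearMap.range Q2 = Submodule.map T2 B2.dualCoannihilator)
    (hQ2ker : LinearMap.ker Q2 = E2)
    (G1 : W →ₗ[K] V)
    (hG1 : ∀ f : W, G1 f ∈ B1.dualCoannihilator ∧ T1 (G1 f) = Q1 f)
    (G2 : V →ₗ[K] U)
    (hG2 : ∀ f : V, G2 f ∈ B2.dualCoannihilator ∧ T2 (G2 f) = Q2 f)
    (C2 : Submodule K (Module.Dual K V))
    (hC2 : C2 = (Submodule.map T2 B2.dualCoannihilator).dualAnnihilator)
    (K1 : Submodule K V)
    (hK1 : K1 = Submodule.comap T1 E1) :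
    ((G2 ∘ₗ G1) ∘ₗ (T1 ∘ₗ T2) ∘ₗ (G2 ∘ₗ G1) = G2 ∘ₗ G1) ↔
      (K1 ⊓ (B1 ⊓ E2.dualAnnihilator).dualCoannihilator ⊓ (B1 ⊓ C2).dualCoannihilator ≤ E2) := by
  -- basic idempotence facts
  have hQ1i : ∀ x, Q1 (Q1 x) = Q1 x := fun x => by
    simpa [LinearMap.comp_apply] using LinearMap.ext_iff.mp hQ1 x
  have hQ2i : ∀ x, Q2 (Q2 x) = Q2 x := fun x => by
    simpa [LinearMap.comp_apply] using LinearMap.ext_iff.mp hQ2 x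
  -- E2 membership via Q2
  have hE2Q2 : ∀ x, x ∈ E2 ↔ Q2 x = 0 := fun x => by
    rw [← hQ2ker]; exact Iff.rfl
  -- uniqueness from semi-regularity
  have huniq1 : ∀ x, x ∈ B1.dualCoannihilator → T1 x = 0 → x = 0 := by
    intro x hx hTx
    have : x ∈ LinearMap.ker T1 ⊓ B1.dualCoannihilator := ⟨hTx, hx⟩
    rw [hsemi1] at this
    simpa using this
  have huniq2 : ∀ x, x ∈ B2.dualCoannihilator → T2 x = 0 → x = 0 := by
    intro x hx hTx
    have : x ∈ LinearMap.ker T2 ⊓ B2.dualCoannihilator := ⟨hTx, hx⟩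
    rw [hsemi2] at this
    simpa using this
  -- G1 ∘ T1 is the identity on B1⊥
  have hG1T1 : ∀ u ∈ B1.dualCoannihilator, G1 (T1 u) = u := by
    intro u hu
    have h1 : T1 u ∈ LinearMap.range Q1 := by
      rw [hQ1range]; exact ⟨u, hu, rfl⟩
    obtain ⟨z, hz⟩ := h1
    have h2 : Q1 (T1 u) = T1 u := by rw [← hz, hQ1i]
    have h3 : T1 (G1 (T1 u) - u) = 0 := by
      rw [map_sub, (hG1 (T1 u)).2, h2, sub_self]
    have h4 := huniq1 _ (sub_mem (hG1 (T1 u)).1 hu) h3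
    exact sub_eq_zero.mp h4
  -- kernel of G2 is E2
  have hkerG2 : ∀ x, G2 x = 0 ↔ x ∈ E2 := by
    intro x
    constructor
    · intro h
      have : Q2 x = 0 := by rw [← (hG2 x).2, h, map_zero]
      exact (hE2Q2 x).mpr this
    · intro h
      have h0 : Q2 x = 0 := (hE2Q2 x).mp h
      have : T2 (G2 x) = 0 := by rw [(hG2 x).2, h0]
      exact huniq2 _ (hG2 x).1 this
  -- kernel of G1 ∘ T1
  have hK1G1 : ∀ x, x ∈ K1 → G1 (T1 x) = 0 := by
    intro x hx
    rw [hK1, Submodule.mem_comap, ← hQ1ker, LinearMap.mem_ker] at hx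
    have : T1 (G1 (T1 x)) = 0 := by rw [(hG1 (T1 x)).2, hx]
    exact huniq1 _ (hG1 (T1 x)).1 this
  -- the key intermediate condition
  have main : ((G2 ∘ₗ G1) ∘ₗ (T1 ∘ₗ T2) ∘ₗ (G2 ∘ₗ G1) = G2 ∘ₗ G1) ↔
      (∀ u ∈ B1.dualCoannihilator, G1 (T1 (u - Q2 u)) ∈ E2) := by
    constructor
    · intro hL u hu
      have := LinearMap.ext_iff.mp hL (T1 u)
      simp only [LinearMap.comp_apply] at this
      rw [hG1T1 u hu, (hG2 u).2] at this
      have hd : G2 (G1 (T1 (Q2 u)) - u) = 0 := by rw [map_sub, this, sub_self]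
      have hmem := (hkerG2 _).mp hd
      have heq : G1 (T1 (u - Q2 u)) = -(G1 (T1 (Q2 u)) - u) := by
        rw [map_sub, map_sub, hG1T1 u hu]; abel
      rw [heq]
      exact neg_mem hmem
    · intro h
      apply LinearMap.ext
      intro f
      simp only [LinearMap.comp_apply]
      rw [(hG2 (G1 f)).2]
      set u := G1 f with hu
      have hum : u ∈ B1.dualCoannihilator := (hG1 f).1
      have hmem := h u hum
      have heq : G1 (T1 (Q2 u)) - u = -(G1 (T1 (u - Q2 u))) := by
        rw [map_sub, map_sub, hG1T1 u hum]; abel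
      have hd : G1 (T1 (Q2 u)) - u ∈ E2 := heq ▸ neg_mem hmem
      have := (hkerG2 _).mpr hd
      rw [map_sub] at this
      exact sub_eq_zero.mp this
  rw [main]
  constructor
  · -- key condition implies the subspace inclusion
    intro h v hv
    simp only [SetLike.mem_coe, Submodule.mem_inf] at hv
    obtain ⟨⟨hvK1, hvA⟩, hvC⟩ := hv
    rw [Submodule.mem_dualCoannihilator] at hvA hvC
    -- first decomposition: v = u₀ + q with u₀ ∈ B1⊥, q ∈ T2(B2⊥)
    obtain ⟨q, hq, hβq⟩ := lemL B1 (Submodule.map T2 B2.dualCoannihilator) v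
      (by
        intro β hβ
        exact hvC β (by rwa [hC2]))
    have hu0 : v - q ∈ B1.dualCoannihilator := by
      rw [Submodule.mem_dualCoannihilator]
      intro β hβ
      rw [map_sub, hβq β hβ, sub_self]
    have hQ2q : Q2 q = q := by
      have : q ∈ LinearMap.range Q2 := by rw [hQ2range]; exact hq
      obtain ⟨z, hz⟩ := this
      rw [← hz, hQ2i]
    have hvv : v - Q2 v = (v - q) - Q2 (v - q) := by
      rw [map_sub, hQ2q]; abel
    have step2 : G1 (T1 (v - Q2 v)) ∈ E2 := by
      rw [hvv]; exact h (v - q) hu0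
    -- second decomposition: v = u₁ + e₁ with u₁ ∈ B1⊥, e₁ ∈ E2
    obtain ⟨e₁, he₁, hβe⟩ := lemL B1 E2 v
      (by intro β hβ; exact hvA β hβ)
    have hu1 : v - e₁ ∈ B1.dualCoannihilator := by
      rw [Submodule.mem_dualCoannihilator]
      intro β hβ
      rw [map_sub, hβe β hβ, sub_self]
    have hQ2e₁ : Q2 e₁ = 0 := (hE2Q2 e₁).mp he₁
    -- G1 (T1 v) = 0 since v ∈ K1
    have hP1v : G1 (T1 v) = 0 := hK1G1 v hvK1
    -- u₁ = -(G1 (T1 e₁))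
    have hu1eq : v - e₁ = -(G1 (T1 e₁)) := by
      have h1 : G1 (T1 (v - e₁)) = v - e₁ := hG1T1 _ hu1
      have h2 : G1 (T1 (v - e₁)) = G1 (T1 v) - G1 (T1 e₁) := by
        rw [map_sub, map_sub]
      rw [h1, hP1v, zero_sub] at h2
      exact h2
    -- e₁ = (v - Q2 v) - ((v - e₁) - Q2 (v - e₁))
    have he1eq : e₁ = (v - Q2 v) - ((v - e₁) - Q2 (v - e₁)) := by
      have hms : Q2 (v - e₁) = Q2 v - Q2 e₁ := map_sub _ _ _
      rw [hms, hQ2e₁]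
      abel
    have hP1e : G1 (T1 e₁) ∈ E2 := by
      have hsub : G1 (T1 e₁) =
          G1 (T1 (v - Q2 v)) - G1 (T1 ((v - e₁) - Q2 (v - e₁))) := by
        conv_lhs => rw [he1eq]
        rw [map_sub, map_sub]
      rw [hsub]
      exact sub_mem step2 (h (v - e₁) hu1)
    -- conclude: Q2 v = 0
    have hQ2P1e : Q2 (G1 (T1 e₁)) = 0 := (hE2Q2 _).mp hP1e
    have : Q2 v = 0 := by
      have hv' : v = -(G1 (T1 e₁)) + e₁ := by
        rw [← hu1eq]; abel
      rw [hv', map_add, map_neg, hQ2P1e, hQ2e₁, neg_zero, zero_add]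
    exact (hE2Q2 v).mpr this
  · -- subspace inclusion implies the key condition
    intro h u hu
    set e := u - Q2 u with he
    have heE2 : e ∈ E2 := by
      rw [hE2Q2, he, map_sub, hQ2i, sub_self]
    set x := e - G1 (T1 e) with hx
    have hxmem : x ∈ K1 ⊓ (B1 ⊓ E2.dualAnnihilator).dualCoannihilator ⊓
        (B1 ⊓ C2).dualCoannihilator := by
      simp only [Submodule.mem_inf]
      refine ⟨⟨?_, ?_⟩, ?_⟩
      · rw [hK1, Submodule.mem_comap, ← hQ1ker, LinearMap.mem_ker]
        rw [hx, map_sub, (hG1 (T1 e)).2, map_sub, hQ1i, sub_self]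
      · rw [Submodule.mem_dualCoannihilator]
        rintro β ⟨hβ1, hβ2⟩
        simp only [SetLike.mem_coe, Submodule.mem_dualAnnihilator] at hβ2
        have h1 : β e = 0 := hβ2 e heE2
        have h2 : β (G1 (T1 e)) = 0 := by
          have := (hG1 (T1 e)).1
          rw [Submodule.mem_dualCoannihilator] at this
          exact this β hβ1
        rw [hx, map_sub, h1, h2, sub_self]
      · rw [Submodule.mem_dualCoannihilator]
        rintro β ⟨hβ1, hβ2⟩
        rw [hC2] at hβ2
        simp only [SetLike.mem_coe, Submodule.mem_dualAnnihilator] at hβ2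
        have hβu : β u = 0 := by
          rw [Submodule.mem_dualCoannihilator] at hu
          exact hu β hβ1
        have hβQ2u : β (Q2 u) = 0 := by
          apply hβ2
          rw [← hQ2range]
          exact ⟨u, rfl⟩
        have h1 : β e = 0 := by rw [he, map_sub, hβu, hβQ2u, sub_self]
        have h2 : β (G1 (T1 e)) = 0 := by
          have := (hG1 (T1 e)).1
          rw [Submodule.mem_dualCoannihilator] at this
          exact this β hβ1
        rw [hx, map_sub, h1, h2, sub_self]
    have hxE2 : x ∈ E2 := h hxmem
    have : G1 (T1 e) = e - x := by rw [hx]; abel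
    rw [this]
    exact sub_mem heE2 hxE2
end

section
/- Let (T1, B1, E1) and (T2, B2, E2) be regular generalized boundary problems with T1 : V → W and T2 : U → V surjective K-linear maps, B1 ≤ V* and B2 ≤ U* finite-dimensional, and let G1 and G2 be their generalized Green's operators. Set C2 := (T2(B2⊥))⊥ ≤ V* and K1 := T1⁻¹(E1) ≤ V. Then G2 ∘ G1 is an outer inverse of T1 ∘ T2 if and only if B1⊥ ⊆ C2⊥ + (E2 ∩ B1⊥) + (E2 ∩ K1), where C2⊥ = {v ∈ V : γ(v) = 0 for all γ ∈ C2}. -/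
/-!
Write `S₁ = B₁⊥`. Since `G₁ ∘ T₁` is the projection onto `S₁` along `K₁` and `T₂ ∘ G₂` is the
projection `Q₂` onto `C₂⊥` along `E₂`, and since `G₂` identifies exactly the vectors that `Q₂`
identifies, the outer-inverse identity says `Q₂ (P₁ (Q₂ v)) = Q₂ v` for all `v ∈ S₁`, where
`P₁ = G₁ ∘ T₁`. For two idempotents `P`, `Q` this condition is equivalent to
`range P ≤ range Q ⊔ (ker Q ⊓ range P) ⊔ (ker Q ⊓ ker P)`, via the decomposition
`v = Q v + (v - P (Q v)) + (P (Q v) - Q v)`.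
-/

open LinearMap

theorem IsIdempotentElem.range_le_range_sup_ker_inf_iff {R M : Type*} [Ring R]
    [AddCommGroup M] [Module R M] {P Q : Module.End R M}
    (hP : IsIdempotentElem P) (hQ : IsIdempotentElem Q) :
    range P ≤ range Q ⊔ (ker Q ⊓ range P) ⊔ (ker Q ⊓ ker P) ↔
      ∀ v ∈ range P, Q (P (Q v)) = Q v := by
  have hPP (x : M) : P (P x) = P x := congr($hP x)
  have hQQ (x : M) : Q (Q x) = Q x := congr($hQ x)
  constructor
  · intro hle v hv
    obtain ⟨x, hx, k, hk, rfl⟩ := Submodule.mem_sup.mp (hle hv)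
    obtain ⟨_, ⟨y, rfl⟩, e, he, rfl⟩ := Submodule.mem_sup.mp hx
    have hQk : Q k = 0 := mem_ker.mp hk.1
    have hPk : P k = 0 := mem_ker.mp hk.2
    have hQe : Q e = 0 := mem_ker.mp he.1
    have hPe : P e = e := hP.mem_range_iff.mp he.2
    have hPv : P (Q y + e + k) = Q y + e + k := hP.mem_range_iff.mp hv
    have hQv : Q (Q y + e + k) = Q y := by simp [hQe, hQk, hQQ]
    have hPQv : P (Q y) = Q y + k := by
      simpa [hPe, hPk, add_right_comm _ e] using hPv
    simp [hQv, hPQv, hQQ, hQk]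
  · intro h v hv
    have hPv : P v = v := hP.mem_range_iff.mp hv
    have hdecomp : v = Q v + (v - P (Q v)) + (P (Q v) - Q v) := by abel
    rw [hdecomp]
    refine Submodule.add_mem_sup (Submodule.add_mem_sup (mem_range_self Q v) ⟨?_, ?_⟩) ⟨?_, ?_⟩
    · simp [mem_ker, h v hv]
    · exact ⟨v - Q v, by rw [map_sub, hPv]⟩
    · simp [mem_ker, h v hv, hQQ]
    · simp [mem_ker, hPP]

section GreenOperator

variable {R V W : Type*} [Ring R] [AddCommGroup V] [Module R V] [AddCommGroup W] [Module R W]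

/-- For `S = B⊥` and `Q` the projector onto `T S` along `E`, this says that `G` is the Green's
operator of `(T, B, E)`; the projector properties of `Q` are separate hypotheses where needed. -/
def IsGreenOperator_s11 (T : V →ₗ[R] W) (S : Submodule R V) (Q : W →ₗ[R] W) (G : W →ₗ[R] V) :
    Prop :=
  ∀ f, G f ∈ S ∧ T (G f) = Q f

variable {T : V →ₗ[R] W} {S : Submodule R V} {Q : W →ₗ[R] W} {G : W →ₗ[R] V}

namespace IsGreenOperator_s11

theorem apply_eq_apply_iff (hinj : ker T ⊓ S = ⊥) (hG : IsGreenOperator_s11 T S Q G) {a b : W} :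
    G a = G b ↔ Q a = Q b := by
  refine ⟨fun h ↦ by rw [← (hG a).2, ← (hG b).2, h], fun h ↦ ?_⟩
  refine injOn_of_disjoint_ker le_rfl (disjoint_iff.mpr (inf_comm (ker T) S ▸ hinj))
    (hG a).1 (hG b).1 ?_
  rw [(hG a).2, (hG b).2, h]

theorem apply_map_eq (hinj : ker T ⊓ S = ⊥) (hG : IsGreenOperator_s11 T S Q G)
    (hQ : IsIdempotentElem Q) (hS : S.map T ≤ range Q) {v : V} (hv : v ∈ S) :
    G (T v) = v := by
  have hQT : Q (T v) = T v := hQ.mem_range_iff.mp (hS ⟨v, hv, rfl⟩)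
  exact injOn_of_disjoint_ker le_rfl (disjoint_iff.mpr (inf_comm (ker T) S ▸ hinj))
    (hG (T v)).1 hv (by rw [(hG (T v)).2, hQT])

theorem isIdempotentElem_comp (hinj : ker T ⊓ S = ⊥) (hG : IsGreenOperator_s11 T S Q G)
    (hQ : IsIdempotentElem Q) (hS : S.map T ≤ range Q) : IsIdempotentElem (G ∘ₗ T) :=
  LinearMap.ext fun v ↦ hG.apply_map_eq hinj hQ hS (hG (T v)).1

theorem range_comp (hinj : ker T ⊓ S = ⊥) (hG : IsGreenOperator_s11 T S Q G)
    (hQ : IsIdempotentElem Q) (hS : S.map T ≤ range Q) : range (G ∘ₗ T) = S :=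
  le_antisymm (range_le_iff_comap.mpr (eq_top_iff.mpr fun v _ ↦ (hG (T v)).1))
    fun v hv ↦ ⟨v, hG.apply_map_eq hinj hQ hS hv⟩

theorem ker_comp (hinj : ker T ⊓ S = ⊥) (hG : IsGreenOperator_s11 T S Q G) :
    ker (G ∘ₗ T) = (ker Q).comap T := by
  ext v
  simpa using hG.apply_eq_apply_iff hinj (a := T v) (b := 0)

end IsGreenOperator_s11

end GreenOperator

theorem stmt_11_general {K U V W : Type*} [Field K]
    [AddCommGroup U] [Module K U] [AddCommGroup V] [Module K V]
    [AddCommGroup W] [Module K W]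
    (T1 : V →ₗ[K] W) (T2 : U →ₗ[K] V)
    (B1 : Submodule K (Module.Dual K V)) (B2 : Submodule K (Module.Dual K U))
    (E1 : Submodule K W) (E2 : Submodule K V)
    (hsemi1 : LinearMap.ker T1 ⊓ B1.dualCoannihilator = ⊥)
    (hsemi2 : LinearMap.ker T2 ⊓ B2.dualCoannihilator = ⊥)
    (Q1 : W →ₗ[K] W) (hQ1 : Q1 ∘ₗ Q1 = Q1)
    (hQ1range : LinearMap.range Q1 = Submodule.map T1 B1.dualCoannihilator)
    (hQ1ker : LinearMap.ker Q1 = E1)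
    (Q2 : V →ₗ[K] V) (hQ2 : Q2 ∘ₗ Q2 = Q2)
    (hQ2range : LinearMap.range Q2 = Submodule.map T2 B2.dualCoannihilator)
    (hQ2ker : LinearMap.ker Q2 = E2)
    (G1 : W →ₗ[K] V)
    (hG1 : ∀ f : W, G1 f ∈ B1.dualCoannihilator ∧ T1 (G1 f) = Q1 f)
    (G2 : V →ₗ[K] U)
    (hG2 : ∀ f : V, G2 f ∈ B2.dualCoannihilator ∧ T2 (G2 f) = Q2 f)
    (C2 : Submodule K (Module.Dual K V))
    (hC2 : C2 = (Submodule.map T2 B2.dualCoannihilator).dualAnnihilator)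
    (K1 : Submodule K V)
    (hK1 : K1 = Submodule.comap T1 E1) :
    ((G2 ∘ₗ G1) ∘ₗ (T1 ∘ₗ T2) ∘ₗ (G2 ∘ₗ G1) = G2 ∘ₗ G1) ↔
      (B1.dualCoannihilator ≤ C2.dualCoannihilator ⊔ (E2 ⊓ B1.dualCoannihilator) ⊔ (E2 ⊓ K1)) := by
  have hG1 : IsGreenOperator_s11 T1 B1.dualCoannihilator Q1 G1 := hG1
  have hG2 : IsGreenOperator_s11 T2 B2.dualCoannihilator Q2 G2 := hG2
  have hS1 : B1.dualCoannihilator.map T1 ≤ range Q1 := hQ1range.ge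
  have hP1 : IsIdempotentElem (G1 ∘ₗ T1) := hG1.isIdempotentElem_comp hsemi1 hQ1 hS1
  have hC2 : C2.dualCoannihilator = range Q2 := by
    rw [hC2, Subspace.dualAnnihilator_dualCoannihilator_eq, hQ2range]
  have hK1 : K1 = ker (G1 ∘ₗ T1) := by rw [hK1, hG1.ker_comp hsemi1, hQ1ker]
  have hS1range : range (G1 ∘ₗ T1) = B1.dualCoannihilator := hG1.range_comp hsemi1 hQ1 hS1
  rw [hC2, hK1, ← hQ2ker, ← hS1range, hP1.range_le_range_sup_ker_inf_iff hQ2, hS1range]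
  constructor
  · intro hout v hv
    have hv' := congr($hout (T1 v))
    simp only [comp_apply, hG1.apply_map_eq hsemi1 hQ1 hS1 hv, (hG2 v).2] at hv'
    exact (hG2.apply_eq_apply_iff hsemi2).mp hv'
  · intro h
    ext f
    simpa only [comp_apply, (hG2 _).2] using
      (hG2.apply_eq_apply_iff hsemi2).mpr (h (G1 f) (hG1 f).1)

theorem stmt_11 {K U V W : Type*} [Field K]
    [AddCommGroup U] [Module K U] [AddCommGroup V] [Module K V]
    [AddCommGroup W] [Module K W]
    (T1 : V →ₗ[K] W) (T2 : U →ₗ[K] V)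
    (hT1 : Function.Surjective T1) (hT2 : Function.Surjective T2)
    (B1 : Submodule K (Module.Dual K V)) (B2 : Submodule K (Module.Dual K U))
    [FiniteDimensional K B1] [FiniteDimensional K B2]
    (E1 : Submodule K W) (E2 : Submodule K V)
    (hsemi1 : LinearMap.ker T1 ⊓ B1.dualCoannihilator = ⊥)
    (hreg1 : IsCompl (Submodule.map T1 B1.dualCoannihilator) E1)
    (hsemi2 : LinearMap.ker T2 ⊓ B2.dualCoannihilator = ⊥)
    (hreg2 : IsCompl (Submodule.map T2 B2.dualCoannihilator) E2)
    (Q1 : W →ₗ[K] W) (hQ1 : Q1 ∘ₗ Q1 = Q1)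
    (hQ1range : LinearMap.range Q1 = Submodule.map T1 B1.dualCoannihilator)
    (hQ1ker : LinearMap.ker Q1 = E1)
    (Q2 : V →ₗ[K] V) (hQ2 : Q2 ∘ₗ Q2 = Q2)
    (hQ2range : LinearMap.range Q2 = Submodule.map T2 B2.dualCoannihilator)
    (hQ2ker : LinearMap.ker Q2 = E2)
    (G1 : W →ₗ[K] V)
    (hG1 : ∀ f : W, G1 f ∈ B1.dualCoannihilator ∧ T1 (G1 f) = Q1 f)
    (G2 : V →ₗ[K] U)
    (hG2 : ∀ f : V, G2 f ∈ B2.dualCoannihilator ∧ T2 (G2 f) = Q2 f)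
    (C2 : Submodule K (Module.Dual K V))
    (hC2 : C2 = (Submodule.map T2 B2.dualCoannihilator).dualAnnihilator)
    (K1 : Submodule K V)
    (hK1 : K1 = Submodule.comap T1 E1) :
    ((G2 ∘ₗ G1) ∘ₗ (T1 ∘ₗ T2) ∘ₗ (G2 ∘ₗ G1) = G2 ∘ₗ G1) ↔
      (B1.dualCoannihilator ≤ C2.dualCoannihilator ⊔ (E2 ⊓ B1.dualCoannihilator) ⊔ (E2 ⊓ K1)) :=
  stmt_11_general T1 T2 B1 B2 E1 E2 hsemi1 hsemi2 Q1 hQ1 hQ1range hQ1ker Q2 hQ2 hQ2range hQ2ker G1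
    hG1 G2 hG2 C2 hC2 K1 hK1
end

section
/- Let V be a vector space over a field K, let u = (u₁, …, u_m) be vectors in V generating a subspace U, and let β = (β₁, …, β_n) be functionals in V* generating a subspace B. Let β(u) ∈ K^{n×m} be the evaluation matrix with (i,j) entry β_i(u_j). If k¹, …, k^r ∈ K^m is a basis of the kernel of β(u), then U ∩ B⊥ is generated by the vectors Σ_{i=1}^m k¹_i u_i, …, Σ_{i=1}^m k^r_i u_i. -/
/-! With `T c = ∑ cᵢ uᵢ`, `U = range T`, so `U ∩ B⊥ = T (T⁻¹ B⊥)`, and `T⁻¹ B⊥` is the kernel of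
`c ↦ (βᵢ (T c))ᵢ = β(u) c`. Hence `U ∩ B⊥ = T (ker β(u))`, which is spanned by the images `T kʲ`. -/

section

open Module Submodule

variable {R V W ι : Type*} [CommSemiring R] [AddCommMonoid V] [Module R V]

theorem Submodule.comap_dualCoannihilator_span_range [AddCommMonoid W] [Module R W]
    (T : W →ₗ[R] V) (β : ι → Dual R V) :
    (span R (Set.range β)).dualCoannihilator.comap T =
      LinearMap.ker (LinearMap.pi fun i => β i ∘ₗ T) := by
  ext x
  rw [mem_comap, ← SetLike.mem_coe, coe_dualCoannihilator_span, LinearMap.mem_ker]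
  simp [funext_iff]

theorem Matrix.mulVecLin_eq_pi_comp_linearCombination {m n : Type*} [Fintype m]
    [DecidableEq m] {u : m → V} {β : n → Dual R V} {M : Matrix n m R}
    (hM : ∀ i j, M i j = β i (u j)) :
    M.mulVecLin = LinearMap.pi fun i => β i ∘ₗ Fintype.linearCombination R u := by
  ext j i
  simp [hM]

theorem span_range_inf_dualCoannihilator_eq_map_ker {m n : Type*} [Fintype m] [DecidableEq m]
    {u : m → V} {β : n → Dual R V} {M : Matrix n m R} (hM : ∀ i j, M i j = β i (u j)) :
    span R (Set.range u) ⊓ (span R (Set.range β)).dualCoannihilator =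
      (LinearMap.ker M.mulVecLin).map (Fintype.linearCombination R u) := by
  rw [← Fintype.range_linearCombination, ← map_comap_eq,
    comap_dualCoannihilator_span_range, Matrix.mulVecLin_eq_pi_comp_linearCombination hM]

end

theorem stmt_12_general {K V : Type*} [Field K] [AddCommGroup V] [Module K V]
    {m n r : ℕ} (u : Fin m → V) (β : Fin n → Module.Dual K V)
    (M : Matrix (Fin n) (Fin m) K) (hM : ∀ i j, M i j = β i (u j))
    (k : Fin r → (Fin m → K))
    (hkspan : Submodule.span K (Set.range k) = LinearMap.ker M.mulVecLin) :
    Submodule.span K (Set.range u) ⊓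
        (Submodule.span K (Set.range β)).dualCoannihilator =
      Submodule.span K (Set.range fun j : Fin r => ∑ i : Fin m, k j i • u i) := by
  rw [span_range_inf_dualCoannihilator_eq_map_ker hM, ← hkspan, Submodule.map_span,
    ← Set.range_comp]
  simp only [Function.comp_def, Fintype.linearCombination_apply]

theorem stmt_12 {K V : Type*} [Field K] [AddCommGroup V] [Module K V]
    {m n r : ℕ} (u : Fin m → V) (β : Fin n → Module.Dual K V)
    (M : Matrix (Fin n) (Fin m) K) (hM : ∀ i j, M i j = β i (u j))
    (k : Fin r → (Fin m → K))
    (hkli : LinearIndependent K k)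
    (hkspan : Submodule.span K (Set.range k) = LinearMap.ker M.mulVecLin) :
    Submodule.span K (Set.range u) ⊓
        (Submodule.span K (Set.range β)).dualCoannihilator =
      Submodule.span K (Set.range fun j : Fin r => ∑ i : Fin m, k j i • u i) :=
  stmt_12_general u β M hM k hkspan
end

section
/- Let V be a vector space over a field K, let u = (u₁, …, u_m) be vectors in V generating a subspace U, and let β = (β₁, …, β_n) be functionals in V* generating a subspace B. Let β(u) ∈ K^{n×m} be the evaluation matrix with (i,j) entry β_i(u_j). If κ¹, …, κ^s ∈ K^n is a basis of the kernel of the transpose matrix β(u)ᵀ, then U⊥ ∩ B is generated by the functionals Σ_{i=1}^n κ¹_i β_i, …, Σ_{i=1}^n κ^s_i β_i. -/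
open Module Submodule

theorem Submodule.mem_dualAnnihilator_span_range_iff {R M ι : Type*} [CommSemiring R]
    [AddCommMonoid M] [Module R M] (u : ι → M) (φ : Dual R M) :
    φ ∈ (span R (Set.range u)).dualAnnihilator ↔ ∀ j, φ (u j) = 0 := by
  rw [← SetLike.mem_coe, coe_dualAnnihilator_span, Set.mem_ofPred_eq, Set.range_subset_iff]
  rfl

theorem Matrix.ker_transpose_mulVecLin_eq_comap_dualAnnihilator {R M ι ι' : Type*}
    [CommSemiring R] [AddCommMonoid M] [Module R M] [Fintype ι]
    (u : ι' → M) (β : ι → Dual R M) (A : Matrix ι ι' R) (hA : ∀ i j, A i j = β i (u j)) :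
    LinearMap.ker A.transpose.mulVecLin =
      (span R (Set.range u)).dualAnnihilator.comap (Fintype.linearCombination R β) := by
  ext c
  rw [LinearMap.mem_ker, mem_comap, mem_dualAnnihilator_span_range_iff, funext_iff]
  refine forall_congr' fun j => ?_
  simp only [Matrix.mulVecLin_apply, Matrix.mulVec, dotProduct, Matrix.transpose_apply, hA,
    Fintype.linearCombination_apply, LinearMap.sum_apply,
    LinearMap.smul_apply, smul_eq_mul, mul_comm, Pi.zero_apply]

theorem stmt_13_general {K V : Type*} [Field K] [AddCommGroup V] [Module K V]
    {m n s : ℕ} (u : Fin m → V) (β : Fin n → Module.Dual K V)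
    (M : Matrix (Fin n) (Fin m) K) (hM : ∀ i j, M i j = β i (u j))
    (κ : Fin s → (Fin n → K))
    (hκspan : Submodule.span K (Set.range κ) = LinearMap.ker M.transpose.mulVecLin) :
    (Submodule.span K (Set.range u)).dualAnnihilator ⊓
        Submodule.span K (Set.range β) =
      Submodule.span K (Set.range fun j : Fin s => ∑ i : Fin n, κ j i • β i) := by
  set T := Fintype.linearCombination K β
  calc (span K (Set.range u)).dualAnnihilator ⊓ span K (Set.range β)
      = ((span K (Set.range u)).dualAnnihilator.comap T).map T := by
        rw [map_comap_eq, Fintype.range_linearCombination, inf_comm]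
    _ = (span K (Set.range κ)).map T := by
        rw [hκspan, M.ker_transpose_mulVecLin_eq_comap_dualAnnihilator u β hM]
    _ = span K (Set.range fun j : Fin s => ∑ i : Fin n, κ j i • β i) := by
        rw [map_span, ← Set.range_comp]
        rfl

theorem stmt_13 {K V : Type*} [Field K] [AddCommGroup V] [Module K V]
    {m n s : ℕ} (u : Fin m → V) (β : Fin n → Module.Dual K V)
    (M : Matrix (Fin n) (Fin m) K) (hM : ∀ i j, M i j = β i (u j))
    (κ : Fin s → (Fin n → K))
    (hκli : LinearIndependent K κ)
    (hκspan : Submodule.span K (Set.range κ) = LinearMap.ker M.transpose.mulVecLin) :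
    (Submodule.span K (Set.range u)).dualAnnihilator ⊓
        Submodule.span K (Set.range β) =
      Submodule.span K (Set.range fun j : Fin s => ∑ i : Fin n, κ j i • β i) :=
  stmt_13_general u β M hM κ hκspan
end

section
/- Let T : V → W be a surjective K-linear map, B ≤ V* a finite-dimensional subspace, and G : W → V any right inverse of T (T ∘ G = id_W). Then the space of compatibility conditions C := (T(B⊥))⊥ ≤ W* satisfies C = G*(B ∩ (Ker T)⊥), where G* : V* → W* is the transpose map β ↦ β∘G. -/
theorem stmt_14 {K V W : Type*} [Field K] [AddCommGroup V] [Module K V]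
    [AddCommGroup W] [Module K W]
    (T : V →ₗ[K] W) (hT : Function.Surjective T)
    (B : Submodule K (Module.Dual K V)) [FiniteDimensional K B]
    (G : W →ₗ[K] V) (hG : T ∘ₗ G = LinearMap.id) :
    (Submodule.map T B.dualCoannihilator).dualAnnihilator =
      Submodule.map G.dualMap (B ⊓ (LinearMap.ker T).dualAnnihilator) := by
  have hTG : ∀ w, T (G w) = w := fun w => congrArg (· w) hG
  apply le_antisymm
  · intro φ hφ
    rw [Submodule.mem_dualAnnihilator] at hφ
    refine ⟨T.dualMap φ, ⟨?_, ?_⟩, ?_⟩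
    · -- T.dualMap φ ∈ B = (B⊥)⊥
      rw [SetLike.mem_coe, ← Subspace.dualCoannihilator_dualAnnihilator_eq (W := B),
        Submodule.mem_dualAnnihilator]
      intro v hv
      exact hφ (T v) ⟨v, hv, rfl⟩
    · rw [SetLike.mem_coe, Submodule.mem_dualAnnihilator]
      intro v hv
      simp [LinearMap.mem_ker.mp hv]
    · ext w
      simp [hTG w]
  · rintro _ ⟨β, ⟨hβB, hβk⟩, rfl⟩
    rw [Submodule.mem_dualAnnihilator]
    rintro _ ⟨v, hv, rfl⟩
    rw [SetLike.mem_coe, Submodule.mem_dualAnnihilator] at hβk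
    have hker : G (T v) - v ∈ LinearMap.ker T := by
      simp [hTG]
    have : β (G (T v) - v) = 0 := hβk _ hker
    have hv0 : β v = 0 := (Submodule.mem_dualCoannihilator _).mp hv β hβB
    simp only [LinearMap.dualMap_apply', Function.comp_apply]
    have := this
    simpa [map_sub, hv0, sub_eq_zero] using this
end

section
/- Let T2 : U → V be a surjective K-linear map with finite-dimensional kernel, and let B ≤ U* be a subspace with Ker T2 ∩ B⊥ = {0} (i.e., (T2, B) is semi-regular). Then there exists a subspace B2 ≤ B such that (T2, B2) is regular, i.e., U = Ker T2 ⊕ B2⊥. -/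
/-!
Restricting functionals to `N := ker T2` maps `B` onto `N*`: the common kernel of the
restrictions is `N ∩ B⊥ = 0`, and `N` is finite-dimensional. Lift a dual basis of a basis
`(bᵢ)` of `N` to functionals `βᵢ ∈ B`; then `u ↦ ∑ βᵢ(u) bᵢ` is a projection of `U` onto `N`
whose kernel is `span {βᵢ}⊥`.
-/

section

open Module Submodule

variable {K U : Type*} [Field K] [AddCommGroup U] [Module K U]

theorem Submodule.dualCoannihilator_map_dualRestrict (N : Submodule K U)
    (B : Submodule K (Dual K U)) :
    (B.map N.dualRestrict).dualCoannihilator = B.dualCoannihilator.comap N.subtype := by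
  ext x
  simp [mem_dualCoannihilator, dualRestrict_apply]

theorem Submodule.map_dualRestrict_eq_top {N : Submodule K U} [FiniteDimensional K N]
    {B : Submodule K (Dual K U)} (h : Disjoint N B.dualCoannihilator) :
    B.map N.dualRestrict = ⊤ := by
  have hbot : (B.map N.dualRestrict).dualCoannihilator = ⊥ := by
    rw [dualCoannihilator_map_dualRestrict, ← disjoint_iff_comap_eq_bot.mp h]
  rw [← Subspace.dualCoannihilator_dualAnnihilator_eq (W := B.map N.dualRestrict), hbot,
    dualAnnihilator_bot]

theorem Submodule.isCompl_dualCoannihilator_span_of_basis {ι : Type*} [Finite ι]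
    {N : Submodule K U} (b : Basis ι K N) (β : ι → Dual K U)
    (hβ : ∀ i (n : N), β i n = b.repr n i) :
    IsCompl N (span K (Set.range β)).dualCoannihilator := by
  have : Fintype ι := Fintype.ofFinite ι
  let proj : U →ₗ[K] N := b.equivFun.symm.toLinearMap ∘ₗ LinearMap.pi β
  have hker : LinearMap.ker proj = (span K (Set.range β)).dualCoannihilator := by
    apply SetLike.coe_injective
    rw [coe_dualCoannihilator_span]
    ext x
    simp [proj, funext_iff]
  rw [← hker]
  refine LinearMap.isCompl_of_proj fun n => ?_
  simp [proj, hβ]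

theorem Submodule.exists_le_isCompl_dualCoannihilator {N : Submodule K U}
    [FiniteDimensional K N] {B : Submodule K (Dual K U)} (h : Disjoint N B.dualCoannihilator) :
    ∃ B' ≤ B, IsCompl N B'.dualCoannihilator := by
  let b := Module.finBasis K N
  have hlift : ∀ i, ∃ φ ∈ B, N.dualRestrict φ = b.dualBasis i := fun i =>
    mem_map.mp ((map_dualRestrict_eq_top h).ge mem_top)
  choose β hβB hβ using hlift
  refine ⟨span K (Set.range β), span_le.mpr (Set.range_subset_iff.mpr hβB),
    isCompl_dualCoannihilator_span_of_basis b β fun i n => ?_⟩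
  rw [← dualRestrict_apply, hβ, Basis.dualBasis_apply]

end

theorem stmt_17_general {K U V : Type*} [Field K]
    [AddCommGroup U] [Module K U] [AddCommGroup V] [Module K V]
    (T2 : U →ₗ[K] V)
    [FiniteDimensional K (LinearMap.ker T2)]
    (B : Submodule K (Module.Dual K U))
    (hsemi : LinearMap.ker T2 ⊓ B.dualCoannihilator = ⊥) :
    ∃ B2 : Submodule K (Module.Dual K U), B2 ≤ B ∧
      IsCompl (LinearMap.ker T2) B2.dualCoannihilator :=
  Submodule.exists_le_isCompl_dualCoannihilator (disjoint_iff.mpr hsemi)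

theorem stmt_17 {K U V : Type*} [Field K]
    [AddCommGroup U] [Module K U] [AddCommGroup V] [Module K V]
    (T2 : U →ₗ[K] V) (hT2 : Function.Surjective T2)
    [FiniteDimensional K (LinearMap.ker T2)]
    (B : Submodule K (Module.Dual K U))
    (hsemi : LinearMap.ker T2 ⊓ B.dualCoannihilator = ⊥) :
    ∃ B2 : Submodule K (Module.Dual K U), B2 ≤ B ∧
      IsCompl (LinearMap.ker T2) B2.dualCoannihilator :=
  stmt_17_general T2 B hsemi
end
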